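/- arXiv:2203.01293 — 7 statements merged into one kernel-verified Lean document; each statement's English description precedes it below -/
import Mathlib

section
/- Let q be a prime power, k ≥ 2, and suppose gcd(k, q-1) > 1. Then for n ≡ 0 (mod 2k), there exists a set A of polynomials over F_q of degree < n with |A| = q^(n - n/(2k)) such that no two distinct elements u, v ∈ A satisfy u - v = b^k for some polynomial b ∈ F_q[T]. -/
open Polynomial

universe u

namespace SarkozyAux

lemma add_two_le_pow {q s : ℕ} (hq : 3 ≤ q) (hs : 1 ≤ s) : s + 2 ≤ q ^ s := by
  have h3 : s + 2 ≤ 3 ^ s := by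
    induction s with
    | zero => omega
    | succ t ih =>
      rcases Nat.eq_zero_or_pos t with rfl | ht
      · norm_num
      · have h1 := ih ht
        have h2 : 1 ≤ 3 ^ t := Nat.one_le_pow _ _ (by norm_num)
        have h4 : 3 ^ (t + 1) = 3 ^ t + 3 ^ t + 3 ^ t := by ring
        omega
  exact h3.trans (Nat.pow_le_pow_left hq s)

lemma count_lt {q m : ℕ} (hq : 3 ≤ q) (hm : 1 ≤ m) :
    m + ∑ d ∈ Finset.Icc 1 (m / 2), q ^ d < q ^ m := by
  set s := m / 2 with hs
  have hq1 : 1 ≤ q := by omega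
  have hsum : ∑ d ∈ Finset.Icc 1 s, q ^ d ≤ s * q ^ s := by
    have h := Finset.sum_le_card_nsmul (Finset.Icc 1 s) (fun d => q ^ d) (q ^ s)
      (fun d hd => Nat.pow_le_pow_right hq1 (Finset.mem_Icc.mp hd).2)
    simpa [Nat.card_Icc, smul_eq_mul] using h
  rcases Nat.eq_zero_or_pos s with h0 | hspos
  · have hm1 : m = 1 := by omega
    subst hm1
    rw [h0]
    simp
    omega
  · have hdm := Nat.div_add_mod m 2
    have hmod : m % 2 ≤ 1 := Nat.le_of_lt_succ (Nat.mod_lt _ (by norm_num))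
    have hm2 : m ≤ 2 * s + 1 := by omega
    have h2s : 2 * s ≤ m := by omega
    have hps : s + 2 ≤ q ^ s := add_two_le_pow hq hspos
    have key : m + s * q ^ s < q ^ (2 * s) := by
      have h1 : q ^ (2 * s) = q ^ s * q ^ s := by rw [two_mul, pow_add]
      have h2 : (s + 2) * q ^ s ≤ q ^ s * q ^ s := Nat.mul_le_mul_right _ hps
      nlinarith
    calc m + ∑ d ∈ Finset.Icc 1 s, q ^ d ≤ m + s * q ^ s := by omega
      _ < q ^ (2 * s) := key
      _ ≤ q ^ m := Nat.pow_le_pow_right hq1 h2s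

set_option maxHeartbeats 1000000 in
lemma exists_annihilator {K : Type u} [Field K] [Fintype K] {q k m : ℕ}
    (hq : Fintype.card K = q) (hk : k ≠ 0) (hgcd : 1 < Nat.gcd k (q - 1)) (hm : m ≠ 0) :
    ∃ (F : Type u) (_ : Field F) (_ : Fintype F) (ψ : Polynomial K →+ F),
      Fintype.card F = q ^ m ∧
      ∀ b : Polynomial K, ψ (b ^ k) = 0 → b = 0 ∨ 2 * m ≤ b.natDegree := by
  classical
  have hq2 : 2 ≤ q := hq ▸ Fintype.one_lt_card
  have hq3 : 3 ≤ q := by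
    rcases Nat.lt_or_ge q 3 with h | h
    · exfalso
      have : q = 2 := by omega
      rw [this] at hgcd
      simp [Nat.gcd_one_right] at hgcd
    · exact h
  obtain ⟨p, hp⟩ := CharP.exists K
  haveI : CharP K p := hp
  obtain ⟨v, pp, hKv⟩ := FiniteField.card K p
  haveI : Fact p.Prime := ⟨pp⟩
  set E := AlgebraicClosure K with hE
  haveI : CharP E p := charP_of_injective_algebraMap (algebraMap K E).injective p
  haveI : ExpChar E p := ExpChar.prime pp
  set N := (v : ℕ) * m with hN
  have hN0 : N ≠ 0 := by
    have := v.2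
    simp only [hN]
    positivity
  have hqK : q = p ^ (v : ℕ) := by rw [← hq, hKv]
  have hqm : q ^ m = p ^ N := by rw [hqK, ← pow_mul]
  set φ : E →+* E := iterateFrobenius E p N with hφ
  set F : Subfield E := RingHom.eqLocusField φ (RingHom.id E) with hF
  have hmemF : ∀ x : E, x ∈ F ↔ x ^ p ^ N = x := by
    intro x
    have : x ∈ F ↔ φ x = x := Iff.rfl
    rw [this, hφ, iterateFrobenius_def]
  -- algebra structure
  have halg : ∀ x : K, algebraMap K E x ∈ F := by
    intro x
    rw [hmemF, ← map_pow]
    have hx : x ^ p ^ N = x := by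
      rw [← hqm, ← hq]
      exact FiniteField.pow_card_pow m x
    rw [hx]
  let κ : K →+* F :=
  { toFun := fun x => ⟨algebraMap K E x, halg x⟩
    map_one' := by ext; simp
    map_mul' := fun x y => by ext; simp
    map_zero' := by ext; simp
    map_add' := fun x y => by ext; simp }
  letI : Algebra K F := κ.toAlgebra
  -- finiteness
  set g : E[X] := X ^ p ^ N - X with hg
  have hg0 : g ≠ 0 := FiniteField.X_pow_card_pow_sub_X_ne_zero E hN0 pp.one_lt
  have hFfin : (F : Set E).Finite := by
    apply Set.Finite.subset (Polynomial.finite_setOf_isRoot hg0)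
    intro x hx
    simp only [Set.mem_setOf_eq, IsRoot, hg, eval_sub, eval_pow, eval_X]
    rw [sub_eq_zero]
    exact (hmemF x).mp hx
  haveI : Finite F := hFfin
  haveI : Fintype F := Fintype.ofFinite F
  -- cardinality
  have hsep : g.Separable := galois_poly_separable p (p ^ N) (dvd_pow_self p hN0)
  have hsplit : Splits (g.map (algebraMap E E)) := IsAlgClosed.splits _
  have hFset : (F : Set E) = g.rootSet E := by
    ext x
    rw [mem_rootSet_of_ne hg0]
    simp only [SetLike.mem_coe, hmemF, hg, map_sub, map_pow, aeval_X]
    rw [sub_eq_zero]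
  have hcardF : Fintype.card F = q ^ m := by
    have h1 : Fintype.card (g.rootSet E) = g.natDegree :=
      card_rootSet_eq_natDegree hsep hsplit
    have h2 : g.natDegree = p ^ N :=
      FiniteField.X_pow_card_pow_sub_X_natDegree_eq E hN0 pp.one_lt
    have h3 : Fintype.card F = Fintype.card (g.rootSet E) :=
      Fintype.card_congr (Equiv.setCongr hFset)
    rw [h3, h1, h2, hqm]
  haveI : Module.Finite K F := Module.Finite.of_finite
  have hrank : Module.finrank K F = m := by
    have h := Module.card_eq_pow_finrank (K := K) (V := F)
    rw [hcardF, hq] at h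
    exact (Nat.pow_right_injective hq2 h.symm)
  -- generator α
  obtain ⟨g0, hg0gen⟩ := IsCyclic.exists_generator (α := Fˣ)
  set α : F := (g0 : F) with hα
  have hαint : IsIntegral K α := IsIntegral.of_finite K α
  have hadj : IntermediateField.adjoin K {α} = ⊤ := by
    rw [eq_top_iff]
    rintro x -
    by_cases hx : x = 0
    · subst hx; exact zero_mem _
    · obtain ⟨i, hi⟩ := hg0gen (Units.mk0 x hx)
      have hxi : α ^ i = x := by
        have := congrArg (Units.val) hi
        rwa [Units.val_zpow_eq_zpow_val, Units.val_mk0] at this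
      exact hxi ▸ zpow_mem (IntermediateField.mem_adjoin_simple_self K α) i
  set P := minpoly K α with hPdef
  have hPdeg : P.natDegree = m := by
    rw [hPdef, ← IntermediateField.adjoin.finrank hαint, hadj,
      IntermediateField.finrank_top', hrank]
  have hPirr : Irreducible P := minpoly.irreducible hαint
  have hPmonic : P.Monic := minpoly.monic hαint
  -- bad polynomial and β
  set Bad : K[X] := P * ∏ d ∈ Finset.Icc 1 (m / 2), (X ^ q ^ d - X) with hBad
  have hfacmonic : ∀ d ∈ Finset.Icc 1 (m / 2), (X ^ q ^ d - X : K[X]).Monic := by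
    intro d hd
    apply monic_X_pow_sub
    have hd1 : 1 ≤ d := (Finset.mem_Icc.mp hd).1
    have h3 : 3 ≤ q ^ d := le_trans hq3 (Nat.le_self_pow (by omega) q)
    calc degree (X : K[X]) = 1 := degree_X
      _ < (q ^ d : ℕ) := by exact_mod_cast lt_of_lt_of_le (by norm_num : (1:ℕ) < 3) h3
  have hfacdeg : ∀ d ∈ Finset.Icc 1 (m / 2), (X ^ q ^ d - X : K[X]).natDegree = q ^ d := by
    intro d hd
    have hd1 : 1 ≤ d := (Finset.mem_Icc.mp hd).1
    have h3 : 3 ≤ q ^ d := le_trans hq3 (Nat.le_self_pow (by omega) q)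
    have hlt : (X : K[X]).natDegree < (X ^ q ^ d : K[X]).natDegree := by
      rw [natDegree_X, natDegree_X_pow]
      exact lt_of_lt_of_le (by norm_num) h3
    rw [natDegree_sub_eq_left_of_natDegree_lt hlt, natDegree_X_pow]
  have hprodmonic : (∏ d ∈ Finset.Icc 1 (m / 2), (X ^ q ^ d - X : K[X])).Monic :=
    monic_prod_of_monic _ _ hfacmonic
  have hBadmonic : Bad.Monic := hPmonic.mul hprodmonic
  have hBadne : Bad ≠ 0 := hBadmonic.ne_zero
  have hBaddeg : Bad.natDegree = m + ∑ d ∈ Finset.Icc 1 (m / 2), q ^ d := by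
    rw [hBad, natDegree_mul hPmonic.ne_zero hprodmonic.ne_zero, hPdeg,
      natDegree_prod_of_monic _ _ hfacmonic]
    congr 1
    exact Finset.sum_congr rfl hfacdeg
  set BadF : F[X] := Bad.map (algebraMap K F) with hBadF
  have hBadFne : BadF ≠ 0 := (hBadmonic.map _).ne_zero
  obtain ⟨β, hβ⟩ : ∃ β : F, β ∉ BadF.roots.toFinset := by
    by_contra h
    push_neg at h
    have h1 : (Finset.univ : Finset F) ⊆ BadF.roots.toFinset := fun x _ => h x
    have h2 : Fintype.card F ≤ BadF.roots.toFinset.card :=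
      (Finset.card_univ (α := F)) ▸ Finset.card_le_card h1
    have h3 : BadF.roots.toFinset.card ≤ BadF.natDegree :=
      (Multiset.toFinset_card_le _).trans (Polynomial.card_roots' BadF)
    have h4 : BadF.natDegree = Bad.natDegree := by
      rw [hBadF, natDegree_map_eq_of_injective (algebraMap K F).injective]
    have := count_lt hq3 (Nat.one_le_iff_ne_zero.mpr hm)
    rw [hcardF] at h2
    omega
  have hβeval : aeval β Bad ≠ 0 := by
    intro hcontra
    apply hβ
    rw [Multiset.mem_toFinset, mem_roots hBadFne]
    show eval β BadF = 0
    rw [hBadF, eval_map_algebraMap]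
    exact hcontra
  have hβP : aeval β P ≠ 0 := by
    intro h
    apply hβeval
    rw [hBad, map_mul, h, zero_mul]
  have hβd : ∀ d ∈ Finset.Icc 1 (m / 2), β ^ q ^ d ≠ β := by
    intro d hd h
    apply hβeval
    rw [hBad, map_mul, map_prod]
    apply mul_eq_zero_of_right
    apply Finset.prod_eq_zero hd
    rw [map_sub, map_pow, aeval_X, h, sub_self]
  have hβint : IsIntegral K β := IsIntegral.of_finite K β
  set Q := minpoly K β with hQdef
  have hQmonic : Q.Monic := minpoly.monic hβint
  have hQirr : Irreducible Q := minpoly.irreducible hβint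
  have hQdeg : Q.natDegree = m := by
    set dd := Q.natDegree with hdd
    have hddpos : 0 < dd := minpoly.natDegree_pos hβint
    have hfr : Module.finrank K (IntermediateField.adjoin K {β}) = dd :=
      IntermediateField.adjoin.finrank hβint
    have hdvd : dd ∣ m := by
      refine ⟨Module.finrank (IntermediateField.adjoin K {β}) F, ?_⟩
      rw [← hrank, ← hfr]
      exact (Module.finrank_mul_finrank K (IntermediateField.adjoin K {β}) F).symm
    by_contra hne
    have hlt : dd < m := lt_of_le_of_ne (Nat.le_of_dvd (Nat.pos_of_ne_zero hm) hdvd) hne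
    have h2d : dd ≤ m / 2 := by
      obtain ⟨t, ht⟩ := hdvd
      have ht2 : 2 ≤ t := by
        rcases t with _ | _ | t
        · omega
        · omega
        · omega
      have : dd * 2 ≤ m := by nlinarith
      omega
    have hβq : β ^ q ^ dd = β := by
      set L := IntermediateField.adjoin K {β} with hL
      haveI : Finite L := Subtype.finite
      haveI : Fintype L := Fintype.ofFinite L
      have hcardL : Fintype.card L = q ^ dd := by
        rw [Module.card_eq_pow_finrank (K := K) (V := L), hq, hfr]
      have hx := FiniteField.pow_card (⟨β, IntermediateField.mem_adjoin_simple_self K β⟩ : L)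
      rw [hcardL] at hx
      have := congrArg (Subtype.val) hx
      rwa [SubmonoidClass.coe_pow] at this
    exact hβd dd (Finset.mem_Icc.mpr ⟨hddpos, h2d⟩) hβq
  have hQP : Q ≠ P := by
    intro h
    apply hβP
    rw [← h, hQdef]
    exact minpoly.aeval K β
  -- non k-th power c
  obtain ⟨ℓ, lp, hldvd⟩ := Nat.exists_prime_and_dvd (n := Nat.gcd k (q - 1)) (by omega)
  have hlk : ℓ ∣ k := hldvd.trans (Nat.gcd_dvd_left _ _)
  have hlq : ℓ ∣ q - 1 := hldvd.trans (Nat.gcd_dvd_right _ _)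
  have hlcard : ℓ ∣ Nat.card Fˣ := by
    rw [Nat.card_units, Nat.card_eq_fintype_card, hcardF]
    refine hlq.trans ?_
    simpa using Nat.sub_dvd_pow_sub_pow q 1 m
  haveI : Fact ℓ.Prime := ⟨lp⟩
  obtain ⟨gu, hgu⟩ := exists_prime_orderOf_dvd_card' ℓ hlcard
  have hgu1 : gu ≠ 1 := by
    intro h
    rw [h, orderOf_one] at hgu
    exact absurd hgu.symm lp.one_lt.ne'
  have hguk : gu ^ k = 1 := by
    obtain ⟨t, rfl⟩ := hlk
    rw [pow_mul, ← hgu, pow_orderOf_eq_one, one_pow]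
  have hnsurj : ¬ Function.Surjective (fun x : (↥F)ˣ => x ^ k) := by
    intro hs
    have hinj : Function.Injective (fun x : (↥F)ˣ => x ^ k) :=
      (Finite.injective_iff_surjective).mpr hs
    exact hgu1 (hinj (by simp only [hguk, one_pow]))
  obtain ⟨cu, hcu⟩ : ∃ cu : (↥F)ˣ, ∀ x : (↥F)ˣ, x ^ k ≠ cu := by
    by_contra h
    push_neg at h
    exact hnsurj h
  set c : F := (cu : F) with hc
  have hck : ∀ x : F, x ^ k ≠ c := by
    intro x hx
    have hx0 : x ≠ 0 := by
      rintro rfl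
      rw [zero_pow hk] at hx
      exact (Units.ne_zero cu) hx.symm
    exact hcu (Units.mk0 x hx0) (Units.ext (by rw [Units.val_pow_eq_pow_val, Units.val_mk0, hx]))
  -- the annihilator
  refine ⟨↥F, inferInstance, inferInstance,
    AddMonoidHom.mk' (fun w => aeval α w - c * aeval β w)
      (fun a b => by simp only [map_add]; ring), hcardF, ?_⟩
  intro b hb
  by_cases hb0 : b = 0
  · exact Or.inl hb0
  right
  simp only [AddMonoidHom.mk'_apply, map_pow] at hb
  have heq : (aeval α b) ^ k = c * (aeval β b) ^ k := by
    rw [← sub_eq_zero]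
    exact hb
  have hβb : aeval β b = 0 := by
    by_contra hy
    apply hck ((aeval α b) / (aeval β b))
    rw [div_pow, heq, mul_div_assoc, div_self (pow_ne_zero k hy), mul_one]
  have hαb : aeval α b = 0 := by
    rw [hβb, zero_pow hk, mul_zero] at heq
    exact pow_eq_zero_iff hk |>.mp heq
  have hPb : P ∣ b := minpoly.dvd K α hαb
  have hQb : Q ∣ b := minpoly.dvd K β hβb
  have hcop : IsCoprime P Q := by
    rw [hPirr.coprime_iff_not_dvd]
    intro hdvd
    exact hQP (eq_of_monic_of_associated hPmonic hQmonic
      (hPirr.associated_of_dvd hQirr hdvd)).symm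
  have hmul : P * Q ∣ b := hcop.mul_dvd hPb hQb
  have hle : P.natDegree + Q.natDegree ≤ b.natDegree := by
    have h := Polynomial.natDegree_le_of_dvd hmul hb0
    rwa [Polynomial.natDegree_mul hPmonic.ne_zero hQmonic.ne_zero] at h
  rw [hPdeg, hQdeg] at hle
  omega

end SarkozyAux

/-- Sárközy's theorem in function fields: lower bound construction.
For `gcd(k, q-1) > 1` and `2k ∣ n`, there is a set of polynomials of degree `< n`
of size `q^(n - n/(2k))` containing no k-th power difference. -/
theorem sarkozy_kth_power_lower {K : Type*} [Field K] [Fintype K] (q k n : ℕ)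
    (hq : Fintype.card K = q) (hk : 2 ≤ k) (hgcd : 1 < Nat.gcd k (q - 1))
    (hn : 2 * k ∣ n) :
    ∃ A : Finset (Polynomial K), (∀ p ∈ A, p.degree < n) ∧
      A.card = q ^ (n - n / (2 * k)) ∧
      ∀ u ∈ A, ∀ v ∈ A, u ≠ v → ¬ ∃ b : Polynomial K, u - v = b ^ k := by
  classical
  have hk0 : k ≠ 0 := by omega
  rcases Nat.eq_zero_or_pos n with rfl | hnpos
  · refine ⟨{0}, ?_, by simp, ?_⟩
    · intro p hp
      rw [Finset.mem_singleton] at hp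
      subst hp
      simpa [Polynomial.degree_zero] using WithBot.bot_lt_coe 0
    · intro u hu v hv huv
      rw [Finset.mem_singleton] at hu hv
      exact absurd (hu.trans hv.symm) huv
  · set m := n / (2 * k) with hm
    have hnm : 2 * k * m = n := Nat.mul_div_cancel' hn
    have hm0 : m ≠ 0 := by
      rintro h
      rw [h, mul_zero] at hnm
      omega
    obtain ⟨F, _, _, ψ, hcardF, hann⟩ := SarkozyAux.exists_annihilator hq hk0 hgcd hm0
    set V := Polynomial.degreeLT K n with hV
    haveI : Fintype V := Fintype.ofEquiv _ (Polynomial.degreeLTEquiv K n).toEquiv.symm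
    have hcardV : Fintype.card V = q ^ n := by
      rw [Fintype.card_congr (Polynomial.degreeLTEquiv K n).toEquiv]
      simp [hq]
    let ψ' : V →+ F := ψ.comp (V.subtype).toAddMonoidHom
    set ker := ψ'.ker with hker
    have hker_card : q ^ (n - m) ≤ Nat.card ker := by
      have h1 : Nat.card V = Nat.card (V ⧸ ker) * Nat.card ker :=
        AddSubgroup.card_eq_card_quotient_mul_card_addSubgroup ker
      have h2 : Nat.card (V ⧸ ker) ≤ q ^ m := by
        have e := QuotientAddGroup.quotientKerEquivRange ψ'
        rw [Nat.card_congr e.toEquiv]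
        calc Nat.card ψ'.range ≤ Nat.card F :=
              Nat.card_le_card_of_injective _ Subtype.val_injective
          _ = q ^ m := by rw [Nat.card_eq_fintype_card, hcardF]
      have h3 : Nat.card V = q ^ n := by rw [Nat.card_eq_fintype_card, hcardV]
      have h4 : q ^ (n - m) * q ^ m = q ^ n := by
        rw [← pow_add]
        congr 1
        have hmn : m ≤ n := Nat.div_le_self n (2 * k)
        omega
      have hqpos : 0 < q ^ m := by
        have : 2 ≤ q := hq ▸ Fintype.one_lt_card
        positivity
      have h5 : q ^ n ≤ Nat.card ker * q ^ m := by
        rw [← h3, h1, mul_comm (Nat.card (V ⧸ ker))]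
        exact Nat.mul_le_mul_left _ h2
      rw [← h4] at h5
      exact Nat.le_of_mul_le_mul_right h5 hqpos
    haveI : Fintype ker := Fintype.ofFinite ker
    set A₀ : Finset (Polynomial K) :=
      Finset.image (fun w : ker => ((w : V) : Polynomial K)) Finset.univ with hA₀
    have hA₀card : A₀.card = Nat.card ker := by
      rw [hA₀, Finset.card_image_of_injective _ (fun a b h => by
        apply Subtype.ext; apply Subtype.ext; exact h), Finset.card_univ,
        Nat.card_eq_fintype_card]
    have hA₀le : q ^ (n - m) ≤ A₀.card := hA₀card ▸ hker_card
    obtain ⟨A, hAsub, hAcard⟩ := Finset.exists_subset_card_eq hA₀le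
    have hmem : ∀ p ∈ A, p ∈ Polynomial.degreeLT K n ∧ ψ p = 0 := by
      intro p hp
      obtain ⟨w, -, rfl⟩ := Finset.mem_image.mp (hAsub hp)
      exact ⟨(w : V).2, (AddMonoidHom.mem_ker.mp w.2 : ψ' (w : V) = 0)⟩
    refine ⟨A, ?_, hAcard, ?_⟩
    · intro p hp
      exact Polynomial.mem_degreeLT.mp (hmem p hp).1
    · rintro u hu v hv huv ⟨b, hb⟩
      have hu' := hmem u hu
      have hv' := hmem v hv
      have hψ : ψ (b ^ k) = 0 := by
        rw [← hb, map_sub, hu'.2, hv'.2, sub_zero]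
      rcases hann b hψ with rfl | hdeg
      · rw [zero_pow hk0] at hb
        exact huv (sub_eq_zero.mp hb)
      · have huv0 : u - v ≠ 0 := sub_ne_zero.mpr huv
        have hlt : (u - v).natDegree < n := by
          have hmemuv : (u - v) ∈ Polynomial.degreeLT K n := sub_mem hu'.1 hv'.1
          exact (Polynomial.natDegree_lt_iff_degree_lt huv0).mpr
            (Polynomial.mem_degreeLT.mp hmemuv)
        rw [hb, Polynomial.natDegree_pow] at hlt
        have hge : n ≤ k * b.natDegree := by
          calc n = 2 * k * m := hnm.symm
            _ = k * (2 * m) := by ring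
            _ ≤ k * b.natDegree := Nat.mul_le_mul_left k hdeg
        omega
end

section
/- Let q be a prime power, k ≥ 1, and n ≥ 1. There exists a set A of polynomials over F_q of degree < n with |A| ≥ q^(n - 1 - floor((n-1)/k)) such that no two distinct elements of A differ by a k-th power of a polynomial. -/
open Polynomial


lemma exists_polyFinset (K : Type*) [Field K] [Fintype K] (m : ℕ) :
    ∃ S : Finset (Polynomial K), S.card = Fintype.card K ^ m ∧
      ∀ p : Polynomial K, p ∈ S ↔ p.degree < (m : ℕ) := by
  classical
  have hinj : Function.Injective
      (fun v : Fin m → K => ((Polynomial.degreeLTEquiv K m).symm v : Polynomial K)) := by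
    intro a b h
    exact (Polynomial.degreeLTEquiv K m).symm.injective (Subtype.coe_injective h)
  refine ⟨Finset.univ.image
      (fun v : Fin m → K => ((Polynomial.degreeLTEquiv K m).symm v : Polynomial K)), ?_, ?_⟩
  · rw [Finset.card_image_of_injective _ hinj, Finset.card_univ]
    simp
  · intro p
    simp only [Finset.mem_image, Finset.mem_univ, true_and]
    constructor
    · rintro ⟨v, rfl⟩
      exact Polynomial.mem_degreeLT.1 ((Polynomial.degreeLTEquiv K m).symm v).2
    · intro hp
      refine ⟨Polynomial.degreeLTEquiv K m ⟨p, Polynomial.mem_degreeLT.2 hp⟩, ?_⟩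
      simp

lemma two_mul_card_image_le {α β : Type*} [DecidableEq α] [DecidableEq β]
    (s : Finset α) (f : α → β)
    (h : ∀ b ∈ s.image f, 2 ≤ (s.filter (fun a => f a = b)).card) :
    2 * (s.image f).card ≤ s.card := by
  have hs : s = (s.image f).biUnion (fun b => s.filter (fun a => f a = b)) := by
    ext a
    simp only [Finset.mem_biUnion, Finset.mem_filter, Finset.mem_image]
    constructor
    · intro ha; exact ⟨f a, ⟨a, ha, rfl⟩, ha, rfl⟩
    · rintro ⟨b, _, ha, _⟩; exact ha
  calc 2 * (s.image f).card = ∑ _b ∈ s.image f, 2 := by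
        rw [Finset.sum_const, smul_eq_mul, mul_comm]
    _ ≤ ∑ b ∈ s.image f, (s.filter (fun a => f a = b)).card := Finset.sum_le_sum h
    _ = s.card := by
        rw [hs, Finset.card_biUnion]
        · rw [← hs]
        · intro x _ y _ hxy
          simp only [Finset.disjoint_left, Finset.mem_filter]
          rintro a ⟨_, rfl⟩ ⟨_, rfl⟩
          exact hxy rfl


lemma dcard {K : Type*} [Field K] [Fintype K] [DecidableEq K] (k m : ℕ) (hk : 1 ≤ k)
    (B : Finset (Polynomial K)) (hBmem : ∀ p : Polynomial K, p ∈ B ↔ p.degree < (m : ℕ)) :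
    ((B.image (fun b => b ^ k)) ∪ (B.image (fun b => -(b ^ k)))).card ≤ B.card := by
  classical
  by_cases h : ∃ ζ : K, ζ ^ k = -1
  · obtain ⟨ζ, hζ⟩ := h
    have hsub : (B.image (fun b => -(b ^ k))) ⊆ B.image (fun b => b ^ k) := by
      intro d hd
      obtain ⟨b, hb, rfl⟩ := Finset.mem_image.1 hd
      refine Finset.mem_image.2 ⟨Polynomial.C ζ * b, ?_, ?_⟩
      · rw [hBmem] at hb ⊢
        calc (Polynomial.C ζ * b).degree = (ζ • b).degree := by rw [Polynomial.smul_eq_C_mul]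
          _ ≤ b.degree := Polynomial.degree_smul_le _ _
          _ < m := hb
      · rw [mul_pow, ← Polynomial.C_pow, hζ]
        simp
    calc ((B.image (fun b => b ^ k)) ∪ (B.image (fun b => -(b ^ k)))).card
        = (B.image (fun b => b ^ k)).card := by
          rw [Finset.union_eq_left.2 hsub]
      _ ≤ B.card := Finset.card_image_le
  · -- k even and -1 ≠ 1
    have hkeven : Even k := by
      rcases Nat.even_or_odd k with he | ho
      · exact he
      · exact absurd ⟨-1, ho.neg_one_pow⟩ h
    have h2K : (1 : K) ≠ -1 := by
      intro h1
      exact h ⟨1, (one_pow k).trans h1⟩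
    have h2 : ∀ b : Polynomial K, -b = b → b = 0 := by
      intro b hb
      have : (2 : Polynomial K) * b = 0 := by linear_combination -hb
      rcases mul_eq_zero.1 this with h0 | h0
      · exfalso
        have h2z : (2 : K) = 0 := by
          have := congrArg (Polynomial.eval 0) h0
          simpa using this
        exact h2K (by linear_combination h2z)
      · exact h0
    set f : Polynomial K × Bool → Polynomial K := fun x => if x.2 then x.1 ^ k else -(x.1 ^ k) with hf
    have himg : (B.image (fun b => b ^ k)) ∪ (B.image (fun b => -(b ^ k)))
        = (B ×ˢ (Finset.univ : Finset Bool)).image f := by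
      ext d
      simp only [Finset.mem_union, Finset.mem_image, Finset.mem_product, Finset.mem_univ, and_true,
        Prod.exists, hf]
      constructor
      · rintro (⟨b, hb, rfl⟩ | ⟨b, hb, rfl⟩)
        · exact ⟨b, true, hb, by simp⟩
        · exact ⟨b, false, hb, by simp⟩
      · rintro ⟨b, s, hb, rfl⟩
        cases s
        · right; exact ⟨b, hb, by simp⟩
        · left; exact ⟨b, hb, by simp⟩
    have hfib : ∀ d ∈ (B ×ˢ (Finset.univ : Finset Bool)).image f,
        2 ≤ ((B ×ˢ (Finset.univ : Finset Bool)).filter (fun a => f a = d)).card := by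
      intro d hd
      obtain ⟨⟨b, s⟩, hbs, rfl⟩ := Finset.mem_image.1 hd
      have hbB : b ∈ B := (Finset.mem_product.1 hbs).1
      by_cases hb0 : b = 0
      · subst hb0
        have hpair : ({((0 : Polynomial K), true), ((0 : Polynomial K), false)} : Finset (Polynomial K × Bool))
            ⊆ (B ×ˢ (Finset.univ : Finset Bool)).filter (fun a => f a = f (0, s)) := by
          intro x hx
          simp only [Finset.mem_insert, Finset.mem_singleton] at hx
          rcases hx with rfl | rfl <;>
            simp [Finset.mem_filter, Finset.mem_product, hbB, hf, zero_pow (by omega : k ≠ 0)]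
        calc 2 = ({((0 : Polynomial K), true), ((0 : Polynomial K), false)} : Finset (Polynomial K × Bool)).card := by simp
          _ ≤ _ := Finset.card_le_card hpair
      · have hnegB : -b ∈ B := by
          rw [hBmem] at hbB ⊢
          rwa [Polynomial.degree_neg]
        have hne : (b, s) ≠ (-b, s) :=
          fun hEq => hb0 (h2 b (congrArg Prod.fst hEq).symm)
        have hpair : ({(b, s), (-b, s)} : Finset (Polynomial K × Bool))
            ⊆ (B ×ˢ (Finset.univ : Finset Bool)).filter (fun a => f a = f (b, s)) := by
          intro x hx
          simp only [Finset.mem_insert, Finset.mem_singleton] at hx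
          rcases hx with rfl | rfl
          · simp [Finset.mem_filter, Finset.mem_product, hbB]
          · simp [Finset.mem_filter, Finset.mem_product, hnegB, hf, hkeven.neg_pow]
        calc 2 = ({(b, s), (-b, s)} : Finset (Polynomial K × Bool)).card := by
              rw [Finset.card_insert_of_notMem (by simpa using hne), Finset.card_singleton]
          _ ≤ _ := Finset.card_le_card hpair
    have := two_mul_card_image_le (B ×ˢ (Finset.univ : Finset Bool)) f hfib
    rw [himg]
    have hcard : (B ×ˢ (Finset.univ : Finset Bool)).card = B.card * 2 := by simp
    omega
/-- Greedy lower bound: there is a set of polynomials of degree `< n` of size at least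
`q^(n - 1 - ⌊(n-1)/k⌋)` with no k-th power difference. -/
theorem greedy_lower_bound {K : Type*} [Field K] [Fintype K] (q k n : ℕ)
    (hq : Fintype.card K = q) (hk : 1 ≤ k) (hn : 1 ≤ n) :
    ∃ A : Finset (Polynomial K), (∀ p ∈ A, p.degree < n) ∧
      q ^ (n - 1 - (n - 1) / k) ≤ A.card ∧
      ∀ u ∈ A, ∀ v ∈ A, u ≠ v → ¬ ∃ b : Polynomial K, u - v = b ^ k := by
  classical
  set m : ℕ := (n - 1) / k + 1 with hm
  obtain ⟨S, hScard, hSmem⟩ := exists_polyFinset K n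
  obtain ⟨B, hBcard, hBmem⟩ := exists_polyFinset K m
  set D : Finset (Polynomial K) :=
    (B.image (fun b => b ^ k)) ∪ (B.image (fun b => -(b ^ k))) with hD
  have hq0 : 0 < q := hq ▸ Fintype.card_pos
  have hDcard : D.card ≤ q ^ m := by
    calc D.card ≤ B.card := dcard k m hk B hBmem
      _ = q ^ m := by rw [hBcard, hq]
  -- membership of b in B for k-th power differences of degree < n
  have hbB : ∀ (u v b : Polynomial K), u.degree < (n : ℕ) → v.degree < (n : ℕ) → u ≠ v →
      u - v = b ^ k → b ∈ B := by
    intro u v b hu hv huv hb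
    have hsub : (u - v).degree < (n : ℕ) :=
      lt_of_le_of_lt (Polynomial.degree_sub_le u v) (max_lt hu hv)
    have hb0 : b ≠ 0 := by
      rintro rfl
      rw [zero_pow (by omega : k ≠ 0)] at hb
      exact huv (sub_eq_zero.1 hb)
    have hbk0 : b ^ k ≠ 0 := pow_ne_zero k hb0
    have hnat : (b ^ k).natDegree < n := by
      rw [Polynomial.natDegree_lt_iff_degree_lt hbk0]
      rw [← hb]; exact_mod_cast hsub
    rw [Polynomial.natDegree_pow] at hnat
    have hdle : b.natDegree ≤ (n - 1) / k := by
      apply Nat.le_div_iff_mul_le (by omega : 0 < k) |>.2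
      rw [mul_comm]
      omega
    rw [hBmem]
    calc b.degree ≤ b.natDegree := Polynomial.degree_le_natDegree
      _ < (m : ℕ) := by exact_mod_cast Nat.lt_succ_of_le hdle
  -- maximal difference-free subset of S
  set Cand : Finset (Finset (Polynomial K)) :=
    S.powerset.filter
      (fun A => ∀ u ∈ A, ∀ v ∈ A, u ≠ v → ¬ ∃ b : Polynomial K, u - v = b ^ k) with hCand
  have hne : Cand.Nonempty :=
    ⟨∅, Finset.mem_filter.2 ⟨Finset.mem_powerset.2 (Finset.empty_subset S), by simp⟩⟩
  obtain ⟨A, hA, hmax⟩ := Finset.exists_max_image Cand Finset.card hne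
  rw [hCand, Finset.mem_filter, Finset.mem_powerset] at hA
  obtain ⟨hAS, hAfree⟩ := hA
  -- cover property
  have hcover : ∀ p ∈ S, ∃ a ∈ A, p - a ∈ D := by
    intro p hp
    by_cases hpA : p ∈ A
    · refine ⟨p, hpA, ?_⟩
      have h0B : (0 : Polynomial K) ∈ B := by
        rw [hBmem]; simp [Polynomial.degree_zero]
      rw [hD]
      exact Finset.mem_union_left _ (Finset.mem_image.2 ⟨0, h0B, by
        rw [zero_pow (by omega : k ≠ 0), sub_self]⟩)
    · have hins : ¬ (∀ u ∈ insert p A, ∀ v ∈ insert p A, u ≠ v →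
          ¬ ∃ b : Polynomial K, u - v = b ^ k) := by
        intro hfree
        have hmem : insert p A ∈ Cand := by
          rw [hCand, Finset.mem_filter, Finset.mem_powerset]
          exact ⟨Finset.insert_subset hp hAS, hfree⟩
        have := hmax _ hmem
        rw [Finset.card_insert_of_notMem hpA] at this
        omega
      push_neg at hins
      obtain ⟨u, hu, v, hv, huv, b, hbdiff⟩ := hins
      rcases Finset.mem_insert.1 hu with rfl | huA
      · rcases Finset.mem_insert.1 hv with rfl | hvA
        · exact absurd rfl huv
        · refine ⟨v, hvA, ?_⟩
          have hbB' : b ∈ B := hbB u v b ((hSmem u).1 hp) ((hSmem v).1 (hAS hvA)) huv hbdiff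
          rw [hD]
          exact Finset.mem_union_left _ (Finset.mem_image.2 ⟨b, hbB', hbdiff.symm⟩)
      · rcases Finset.mem_insert.1 hv with rfl | hvA
        · refine ⟨u, huA, ?_⟩
          have hbB' : b ∈ B := hbB u v b ((hSmem u).1 (hAS huA)) ((hSmem v).1 hp) huv hbdiff
          rw [hD]
          refine Finset.mem_union_right _ (Finset.mem_image.2 ⟨b, hbB', ?_⟩)
          rw [← hbdiff]; ring
        · exact absurd ⟨b, hbdiff⟩ (hAfree u huA v hvA huv)
  -- counting
  have hsubset : S ⊆ A.biUnion (fun a => D.image (fun d => a + d)) := by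
    intro p hp
    obtain ⟨a, haA, hd⟩ := hcover p hp
    exact Finset.mem_biUnion.2 ⟨a, haA, Finset.mem_image.2 ⟨p - a, hd, by ring⟩⟩
  have hcount : q ^ n ≤ A.card * q ^ m := by
    calc q ^ n = S.card := by rw [hScard, hq]
      _ ≤ (A.biUnion (fun a => D.image (fun d => a + d))).card := Finset.card_le_card hsubset
      _ ≤ ∑ a ∈ A, (D.image (fun d => a + d)).card := Finset.card_biUnion_le
      _ ≤ ∑ _a ∈ A, q ^ m := Finset.sum_le_sum (fun a _ => le_trans Finset.card_image_le hDcard)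
      _ = A.card * q ^ m := by rw [Finset.sum_const, smul_eq_mul]
  have hmn : m ≤ n := by
    have := Nat.div_le_self (n - 1) k
    omega
  have hfinal : q ^ (n - 1 - (n - 1) / k) ≤ A.card := by
    have heq : n - 1 - (n - 1) / k = n - m := by omega
    rw [heq]
    apply Nat.le_of_mul_le_mul_right _ (pow_pos hq0 m)
    calc q ^ (n - m) * q ^ m = q ^ n := by rw [← pow_add]; congr 1; omega
      _ ≤ A.card * q ^ m := hcount
  exact ⟨A, fun p hp => (hSmem p).1 (hAS hp), hfinal, hAfree⟩
end

section
/- Let q be a prime power and k ≥ 1 with gcd(k, q-1) > 1. Then the 2-fold strong product Paley_k(F_q) ⊠ Paley_k(F_q) contains an independent set of size q. Concretely, if β ∈ F_q is not a k-th power, then {(x, βx) : x ∈ F_q} is an independent set: for distinct x, y ∈ F_q, not both of x - y and β(x - y) are k-th powers in F_q. -/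
/-! If `β` is not a `k`-th power, then for `x ≠ y` the two differences `x - y` and
`β (x - y)` cannot both be `k`-th powers, since otherwise `β` is their quotient, a `k`-th power.
A non-`k`-th power exists because `d = gcd(k, q - 1) > 1`: by Cauchy, `F_q^×` has an element
of prime order dividing `d`, so `z ↦ z ^ k` is not injective on `F_q`, hence not surjective. -/

theorem exists_ne_one_pow_eq_one_of_one_lt_gcd {G : Type*} [Group G] [Finite G] {k : ℕ}
    (hgcd : 1 < Nat.gcd k (Nat.card G)) : ∃ g : G, g ≠ 1 ∧ g ^ k = 1 := by
  obtain ⟨p, hp, hpd⟩ := Nat.exists_prime_and_dvd hgcd.ne'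
  have := Fact.mk hp
  obtain ⟨g, hg⟩ := exists_prime_orderOf_dvd_card' p (hpd.trans (Nat.gcd_dvd_right _ _))
  refine ⟨g, fun h => hp.one_lt.ne' (by rw [← hg, h, orderOf_one]), ?_⟩
  rw [← orderOf_dvd_iff_pow_eq_one, hg]
  exact hpd.trans (Nat.gcd_dvd_left _ _)

theorem exists_not_pow_of_one_lt_gcd {M : Type*} [GroupWithZero M] [Finite M] {k : ℕ}
    (hgcd : 1 < Nat.gcd k (Nat.card M - 1)) : ∃ β : M, ¬ ∃ z : M, β = z ^ k := by
  rw [← Nat.card_units] at hgcd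
  obtain ⟨g, hg1, hgk⟩ := exists_ne_one_pow_eq_one_of_one_lt_gcd hgcd
  have not_injective : ¬ Function.Injective (fun z : M => z ^ k) := fun hinj =>
    hg1 (Units.ext (hinj (by simp only [← Units.val_pow_eq_pow_val, hgk, Units.val_one, one_pow])))
  obtain ⟨β, hβ⟩ := not_forall.mp (mt Finite.injective_iff_surjective.mpr not_injective)
  exact ⟨β, fun ⟨z, hz⟩ => hβ ⟨z, hz.symm⟩⟩

theorem eq_div_pow_of_mul_eq_pow {K : Type*} [CommGroupWithZero K] {a β z w : K} {k : ℕ}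
    (ha : a ≠ 0) (hz : a = z ^ k) (hw : β * a = w ^ k) : β = (w / z) ^ k := by
  rw [div_pow, ← hz, ← hw, mul_div_cancel_right₀ _ ha]

theorem ncard_setOf_eq_graph {α β : Type*} (f : α → β) :
    Set.ncard {p : α × β | ∃ x : α, p = (x, f x)} = Nat.card α := by
  have hrange : {p : α × β | ∃ x : α, p = (x, f x)} = Set.range (fun x => (x, f x)) := by
    ext p
    simp only [Set.mem_ofPred_eq, Set.mem_range, eq_comm]
  rw [hrange, Set.ncard_range_of_injective fun a b h => (Prod.mk.inj h).1]

theorem paley_product_indep_set_general {K : Type*} [Field K] [Fintype K] (q k : ℕ)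
    (hq : Fintype.card K = q) (hgcd : 1 < Nat.gcd k (q - 1)) :
    ∃ β : K, (¬ ∃ z : K, β = z ^ k) ∧
      Set.ncard {p : K × K | ∃ x : K, p = (x, β * x)} = q ∧
      ∀ x y : K, x ≠ y →
        ¬ ((∃ z : K, x - y = z ^ k) ∧ (∃ z : K, β * x - β * y = z ^ k)) := by
  have hcard : Nat.card K = q := by rw [Nat.card_eq_fintype_card, hq]
  obtain ⟨β, hβ⟩ := exists_not_pow_of_one_lt_gcd (M := K) (hcard ▸ hgcd)
  refine ⟨β, hβ, by rw [ncard_setOf_eq_graph, hcard], ?_⟩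
  rintro x y hxy ⟨⟨z, hz⟩, ⟨w, hw⟩⟩
  exact hβ ⟨w / z, eq_div_pow_of_mul_eq_pow (sub_ne_zero.mpr hxy) hz (by rw [mul_sub, hw])⟩

/-- `Paley_k(F_q) ⊠ Paley_k(F_q)` contains an independent set of size `q`:
for a non-k-th-power `β`, the set `{(x, βx)}` is independent: for distinct `x, y`,
not both of `x - y` and `β(x - y)` are k-th powers. -/
theorem paley_product_indep_set {K : Type*} [Field K] [Fintype K] (q k : ℕ)
    (hq : Fintype.card K = q) (hk : 1 ≤ k) (hgcd : 1 < Nat.gcd k (q - 1)) :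
    ∃ β : K, (¬ ∃ z : K, β = z ^ k) ∧
      Set.ncard {p : K × K | ∃ x : K, p = (x, β * x)} = q ∧
      ∀ x y : K, x ≠ y →
        ¬ ((∃ z : K, x - y = z ^ k) ∧ (∃ z : K, β * x - β * y = z ^ k)) :=
  paley_product_indep_set_general q k hq hgcd
end

section
/- Let q be a prime power, k ≥ 1 with gcd(k, q-1) = d > 1, and let β be a generator of the cyclic group F_q^*. The set A = {(x, βx, β²x, ..., β^(k-1)x) : x ∈ F_q} is an independent set of size q in the k-fold strong product of the complement graph of Paley_k(F_q): for any distinct x, y ∈ F_q, there exists j ∈ {0,1,...,k-1} such that β^j (x - y) is a k-th power in F_q. -/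
/-- The set `{(x, βx, ..., β^(k-1)x)}` is an independent set of size `q` in the
k-fold strong product of the complement of `Paley_k(F_q)`: for any distinct `x, y`
there is `j < k` with `β^j (x - y)` a k-th power. -/
theorem complement_product_indep_set {K : Type*} [Field K] [Fintype K] (q k : ℕ)
    (hq : Fintype.card K = q) (hk : 1 ≤ k) (hgcd : 1 < Nat.gcd k (q - 1))
    (β : K) (hβ : ∀ x : K, x ≠ 0 → ∃ j : ℕ, β ^ j = x) :
    Set.ncard {u : Fin k → K | ∃ x : K, u = fun i : Fin k => β ^ (i : ℕ) * x} = q ∧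
      ∀ x y : K, x ≠ y → ∃ j : Fin k, ∃ z : K, β ^ (j : ℕ) * (x - y) = z ^ k := by
  classical
  have hd := Nat.gcd_dvd_right k (q - 1)
  set d := Nat.gcd k (q - 1) with hdef
  have hdk : d ∣ k := Nat.gcd_dvd_left k (q - 1)
  have hdpos : 0 < d := lt_trans one_pos hgcd
  have hq1 : 2 ≤ q - 1 := by
    rcases Nat.eq_zero_or_pos (q - 1) with h | h
    · exfalso
      have h2 : 2 ≤ q := by rw [← hq]; exact Fintype.one_lt_card
      omega
    · have := Nat.le_of_dvd h hd
      omega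
  have hq3 : 3 ≤ q := by omega
  -- β ≠ 0
  have hβ0 : β ≠ 0 := by
    have : ∃ x : K, x ≠ 0 ∧ x ≠ 1 := by
      by_contra h
      push_neg at h
      have hsub : (Finset.univ : Finset K) ⊆ {0, 1} := by
        intro x _
        simp only [Finset.mem_insert, Finset.mem_singleton]
        by_cases hx : x = 0
        · exact Or.inl hx
        · exact Or.inr (h x hx)
      have := Finset.card_le_card hsub
      have hc : ({0, 1} : Finset K).card ≤ 2 := Finset.card_insert_le _ _ |>.trans (by simp)
      rw [Finset.card_univ, hq] at this
      omega
    obtain ⟨x, hx0, hx1⟩ := this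
    obtain ⟨j, hj⟩ := hβ x hx0
    intro hb
    rcases Nat.eq_zero_or_pos j with h | h
    · rw [h, pow_zero] at hj; exact hx1 hj.symm
    · rw [hb, zero_pow (by omega : j ≠ 0)] at hj; exact hx0 hj.symm
  -- β^(q-1) = 1
  have hβq : β ^ (q - 1) = 1 := by
    rw [← hq]; exact FiniteField.pow_card_sub_one_eq_one β hβ0
  -- β^d is a k-th power
  have hbd : ∃ w : K, β ^ d = w ^ k := by
    set u : Kˣ := Units.mk0 β hβ0 with hu
    have huq : u ^ (q - 1 : ℕ) = 1 := by
      ext; push_cast; simpa [hu] using hβq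
    have hbez : ((d : ℕ) : ℤ) = (k : ℤ) * Nat.gcdA k (q - 1) + ((q - 1 : ℕ) : ℤ) * Nat.gcdB k (q - 1) := Nat.gcd_eq_gcd_ab k (q - 1)
    refine ⟨((u ^ Nat.gcdA k (q - 1) : Kˣ) : K), ?_⟩
    have : (u : Kˣ) ^ (d : ℤ) = (u ^ Nat.gcdA k (q - 1)) ^ (k : ℕ) := by
      rw [hbez, zpow_add, zpow_mul, zpow_mul]
      have h1 : (u : Kˣ) ^ ((q - 1 : ℕ) : ℤ) = 1 := by
        rw [zpow_natCast, huq]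
      rw [h1, one_zpow, mul_one, zpow_natCast, ← zpow_natCast (u ^ Nat.gcdA k (q - 1)) k,
        ← zpow_natCast u k, ← zpow_mul, ← zpow_mul, mul_comm]
    have := congrArg (Units.val) this
    push_cast at this
    simpa [hu] using this
  obtain ⟨w, hw⟩ := hbd
  constructor
  · -- cardinality
    have hset : {u : Fin k → K | ∃ x : K, u = fun i : Fin k => β ^ (i : ℕ) * x} =
        Set.range (fun x : K => fun i : Fin k => β ^ (i : ℕ) * x) := by
      ext u
      simp [Set.mem_setOf_eq, Set.mem_range, eq_comm]
    rw [hset, ← Set.image_univ]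
    rw [Set.ncard_image_of_injective _ ?_, Set.ncard_univ, Nat.card_eq_fintype_card, hq]
    intro a b hab
    have := congrFun hab ⟨0, hk⟩
    simpa using this
  · intro x y hxy
    have hxy0 : x - y ≠ 0 := sub_ne_zero_of_ne hxy
    obtain ⟨m, hm⟩ := hβ (x - y) hxy0
    set r := m % d with hr
    have hrd : r < d := Nat.mod_lt _ hdpos
    set j := (d - r) % d with hj
    have hjk : j < k := lt_of_lt_of_le (Nat.mod_lt _ hdpos) (Nat.le_of_dvd hk hdk)
    have hdvd : d ∣ j + m := by
      have h1 : (j + m) % d = (j + r) % d := by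
        rw [hj, hr, Nat.add_mod, Nat.mod_mod_of_dvd, ← Nat.add_mod]
        exact dvd_refl d
      rcases Nat.eq_zero_or_pos r with h | h
      · have : j = 0 := by rw [hj, h, Nat.sub_zero, Nat.mod_self]
        refine Nat.dvd_of_mod_eq_zero ?_
        rw [h1, this, h]
        simp
      · have hj' : j = d - r := by
          rw [hj]; exact Nat.mod_eq_of_lt (by omega)
        refine Nat.dvd_of_mod_eq_zero ?_
        rw [h1, hj']
        have : d - r + r = d := Nat.sub_add_cancel (le_of_lt hrd)
        rw [this, Nat.mod_self]
    obtain ⟨t, ht⟩ := hdvd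
    refine ⟨⟨j, hjk⟩, w ^ t, ?_⟩
    have : β ^ j * (x - y) = β ^ (j + m) := by rw [pow_add, hm]
    rw [this, ht, pow_mul, hw, ← pow_mul, mul_comm k t, pow_mul]
end

section
/- Suppose q is a prime power, k ≥ 2, and -1 is a k-th power in F_q. Then the Lovász theta function satisfies ϑ(Paley_k(F_q)) ≤ q^(1 - 1/k). -/
open scoped RealInnerProductSpace

/-- The Lovász theta function of a (possibly directed) graph given by an adjacency
relation: the infimum over orthonormal representations `u` (nonadjacent vertices get
orthogonal unit vectors) and unit handles `c` of `max_v 1/⟨c, u v⟩²`. -/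
noncomputable def lovaszTheta {V : Type*} [Fintype V] (Adj : V → V → Prop) : ℝ :=
  sInf {t : ℝ | ∃ (d : ℕ) (u : V → EuclideanSpace ℝ (Fin d))
      (c : EuclideanSpace ℝ (Fin d)),
    (∀ v, ‖u v‖ = 1) ∧ ‖c‖ = 1 ∧
    (∀ v w, v ≠ w → ¬ Adj v w → ⟪u v, u w⟫ = 0) ∧
    (∀ v, 1 ≤ t * ⟪c, u v⟫ ^ 2)}

open Finset

private lemma paley_aux_amgm {B Q : ℝ} (hB : 0 ≤ B) (i j k : ℕ) (hij : i + j = k)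
    (hBk : B ^ k = Q) : 2 * Real.sqrt Q ≤ B ^ i + B ^ j := by
  have h1 : Real.sqrt Q = Real.sqrt (B ^ i) * Real.sqrt (B ^ j) := by
    rw [← Real.sqrt_mul (by positivity), ← pow_add, hij, hBk]
  nlinarith [sq_nonneg (Real.sqrt (B ^ i) - Real.sqrt (B ^ j)),
    Real.sq_sqrt (show (0:ℝ) ≤ B ^ i by positivity),
    Real.sq_sqrt (show (0:ℝ) ≤ B ^ j by positivity)]

private lemma paley_aux_L2 {k : ℕ} {Q : ℝ} (hk : 2 ≤ k) (hQ : 1 ≤ Q) :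
    (1 + ((k : ℝ) - 1) * Real.sqrt Q) * (Q - Q ^ ((1:ℝ) - 1 / (k:ℝ))) ≤
      Q ^ ((1:ℝ) - 1 / (k:ℝ)) * (Q - 1) := by
  have hk0 : (k : ℝ) ≠ 0 := by
    have : (0:ℝ) < k := by exact_mod_cast Nat.lt_of_lt_of_le (by norm_num) hk
    exact ne_of_gt this
  have hQ0 : (0:ℝ) < Q := lt_of_lt_of_le one_pos hQ
  set B : ℝ := Q ^ ((1:ℝ) / (k:ℝ)) with hB
  set T : ℝ := Q ^ ((1:ℝ) - 1 / (k:ℝ)) with hT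
  have hB1 : 1 ≤ B := Real.one_le_rpow hQ (by positivity)
  have hT0 : 0 < T := Real.rpow_pos_of_pos hQ0 _
  have hTB : T * B = Q := by
    rw [hT, hB, ← Real.rpow_add hQ0]
    norm_num
  have hBk : B ^ k = Q := by
    rw [hB, one_div, Real.rpow_inv_natCast_pow (le_of_lt hQ0) (by exact_mod_cast hk0)]
  -- key: 1 + (k-1)√Q ≤ ∑_{j<k} B^j
  have hkey : 1 + ((k : ℝ) - 1) * Real.sqrt Q ≤ ∑ j ∈ range k, B ^ j := by
    have h2 : ∑ j ∈ range k, B ^ j = 1 + ∑ j ∈ range (k-1), B ^ (j+1) := by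
      have hk' : k - 1 + 1 = k := by omega
      rw [← hk', Finset.sum_range_succ']
      simp [add_comm]
    have h3 : ∑ j ∈ range (k-1), B ^ (k-1-j) = ∑ j ∈ range (k-1), B ^ (j+1) := by
      rw [← Finset.sum_range_reflect (fun j => B ^ (j+1)) (k-1)]
      apply Finset.sum_congr rfl
      intro j hj
      simp only [Finset.mem_range] at hj
      congr 1
      omega
    have h4 : ((k:ℝ) - 1) * (2 * Real.sqrt Q) ≤
        ∑ j ∈ range (k-1), (B ^ (j+1) + B ^ (k-1-j)) := by
      calc ((k:ℝ) - 1) * (2 * Real.sqrt Q)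
          = ∑ _j ∈ range (k-1), 2 * Real.sqrt Q := by
            rw [Finset.sum_const, Finset.card_range, nsmul_eq_mul]
            congr 1
            have : (1:ℝ) ≤ k := by exact_mod_cast Nat.one_le_of_lt hk
            push_cast [Nat.cast_sub (by omega : 1 ≤ k)]
            ring
        _ ≤ _ := by
            apply Finset.sum_le_sum
            intro j hj
            simp only [Finset.mem_range] at hj
            exact paley_aux_amgm (le_trans zero_le_one hB1) _ _ k (by omega) hBk
    rw [Finset.sum_add_distrib, h3] at h4
    linarith [h2, h4]
  have hgeom : (∑ j ∈ range k, B ^ j) * (B - 1) = Q - 1 := by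
    rw [geom_sum_mul, hBk]
  have hB10 : 0 ≤ B - 1 := by linarith
  have hQT : Q - T = T * (B - 1) := by rw [mul_sub, hTB]; ring
  calc (1 + ((k : ℝ) - 1) * Real.sqrt Q) * (Q - T)
      = T * ((1 + ((k : ℝ) - 1) * Real.sqrt Q) * (B - 1)) := by rw [hQT]; ring
    _ ≤ T * ((∑ j ∈ range k, B ^ j) * (B - 1)) := by
        apply mul_le_mul_of_nonneg_left _ (le_of_lt hT0)
        exact mul_le_mul_of_nonneg_right hkey hB10
    _ = T * (Q - 1) := by rw [hgeom]


private lemma paley_aux_neg_le_of_sq_le {x y : ℝ} (hy : 0 ≤ y) (h : x ^ 2 ≤ y ^ 2) : -y ≤ x := by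
  nlinarith [sq_nonneg (x + y)]

/-- From the Cauchy-Schwarz consequence, a lower bound on `G`. -/
private lemma paley_aux_quad {N Q G : ℝ} (hN : 1 ≤ N) (hNQ : N ≤ Q - 1)
    (h1 : (N + N * G) ^ 2 ≤ (Q - 1 - N) * (Q * N - N ^ 2 - N * G ^ 2)) :
    -(N + (Q - 1 - N) * Real.sqrt Q) ≤ (Q - 1) * G := by
  have hQ0 : (0:ℝ) ≤ Q := by linarith
  have hquad : N * ((Q-1) * G^2 + 2*N*G + N - (Q-1-N)*(Q-N)) ≤ 0 := by nlinarith [h1]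
  have hquad2 : (Q-1) * G^2 + 2*N*G + N - (Q-1-N)*(Q-N) ≤ 0 := by nlinarith [hquad, hN]
  have hx2 : ((Q-1) * G + N) ^ 2 ≤ ((Q-1-N) * Real.sqrt Q) ^ 2 := by
    nlinarith [hquad2, Real.sq_sqrt hQ0, mul_nonpos_of_nonneg_of_nonpos
      (show (0:ℝ) ≤ Q - 1 by linarith) hquad2]
  have hy : 0 ≤ (Q-1-N) * Real.sqrt Q := mul_nonneg (by linarith) (Real.sqrt_nonneg Q)
  have := paley_aux_neg_le_of_sq_le hy hx2
  linarith



set_option maxHeartbeats 8000000 in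

/-- If `-1` is a k-th power in `F_q`, then `ϑ(Paley_k(F_q)) ≤ q^(1 - 1/k)`. -/
theorem lovasz_theta_paley_upper {K : Type*} [Field K] [Fintype K] (q k : ℕ)
    (hq : Fintype.card K = q) (hk : 2 ≤ k) (hm1 : ∃ z : K, z ^ k = -1) :
    lovaszTheta (fun x y : K => x ≠ y ∧ ∃ z : K, x - y = z ^ k) ≤
      (q : ℝ) ^ ((1 : ℝ) - 1 / (k : ℝ)) := by
  classical
  subst hq
  obtain ⟨z₀, hz₀⟩ := hm1
  have hk0 : k ≠ 0 := by omega
  have hq2 : 2 ≤ Fintype.card K := Fintype.one_lt_card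
  -- the primitive additive character
  set ψ : AddChar K ℂ := AddChar.FiniteField.primitiveChar_to_Complex K with hψdef
  have hψ : ψ.IsPrimitive := AddChar.FiniteField.primitiveChar_to_Complex_isPrimitive K
  have hchar : 0 < ringChar K := by
    have : (ringChar K).Prime := CharP.char_is_prime K (ringChar K)
    exact this.pos
  have hconj : ∀ x : K, (starRingEnd ℂ) (ψ x) = ψ (-x) := by
    intro x
    rw [AddChar.starComp_apply hchar, AddChar.inv_apply]
  have KS : ∀ c : K, ∑ b : K, ψ (b * c) = if c = 0 then (Fintype.card K : ℂ) else 0 := by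
    intro c
    have h := AddChar.sum_mulShift c hψ
    rwa [Nat.cast_ite, Nat.cast_zero] at h
  -- basic sets and numbers
  set S : Finset K := Finset.univ.filter (fun x => x ≠ 0 ∧ ∃ z : K, z ^ k = x) with hSdef
  have hmemS : ∀ x : K, x ∈ S ↔ x ≠ 0 ∧ ∃ z : K, z ^ k = x := by
    intro x; simp [hSdef]
  set N : ℕ := S.card with hNdef
  set Q : ℝ := (Fintype.card K : ℝ) with hQdef
  set T : ℝ := Q ^ ((1:ℝ) - 1 / (k:ℝ)) with hTdef
  have hQ2 : (2:ℝ) ≤ Q := by rw [hQdef]; exact_mod_cast hq2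
  have hQ0 : (0:ℝ) < Q := by linarith
  have hT1 : (1:ℝ) ≤ T := by
    apply Real.one_le_rpow (by linarith)
    have h1 : 1 / (k:ℝ) ≤ 1 := by
      apply div_le_one_of_le₀ <;> norm_num
      exact_mod_cast Nat.one_le_of_lt hk
    linarith
  have hT0 : (0:ℝ) < T := by linarith
  have hTQ : T ≤ Q := by
    have h1 : 0 ≤ 1 / (k:ℝ) := by positivity
    have h := Real.rpow_le_rpow_of_exponent_le (show (1:ℝ) ≤ Q by linarith)
      (show (1:ℝ) - 1/(k:ℝ) ≤ 1 by linarith)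
    rwa [Real.rpow_one] at h
  -- properties of S
  have hS0 : (0:K) ∉ S := by simp [hmemS]
  have h1S : (1:K) ∈ S := by
    rw [hmemS]; exact ⟨one_ne_zero, 1, one_pow k⟩
  have hSmul : ∀ s ∈ S, ∀ x ∈ S, s * x ∈ S := by
    intro s hs x hx
    rw [hmemS] at hs hx ⊢
    obtain ⟨hs0, z, hz⟩ := hs
    obtain ⟨hx0, w, hw⟩ := hx
    exact ⟨mul_ne_zero hs0 hx0, z * w, by rw [mul_pow, hz, hw]⟩
  have hSinv : ∀ x ∈ S, x⁻¹ ∈ S := by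
    intro x hx
    rw [hmemS] at hx ⊢
    obtain ⟨hx0, z, hz⟩ := hx
    have hz0 : z ≠ 0 := by
      intro h; rw [h] at hz; simp [zero_pow hk0] at hz; exact hx0 hz.symm
    exact ⟨inv_ne_zero hx0, z⁻¹, by rw [inv_pow, hz]⟩
  have hSneg : ∀ x ∈ S, -x ∈ S := by
    intro x hx
    rw [hmemS] at hx ⊢
    obtain ⟨hx0, z, hz⟩ := hx
    refine ⟨neg_ne_zero.2 hx0, z₀ * z, ?_⟩
    rw [mul_pow, hz₀, hz, neg_one_mul]
  have hN1 : 1 ≤ N := Finset.card_pos.2 ⟨1, h1S⟩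
  have hN0 : (0:ℝ) < (N:ℝ) := by exact_mod_cast hN1
  have hNQ : (N:ℝ) ≤ Q - 1 := by
    have : S ⊆ Finset.univ.erase 0 := by
      intro x hx
      rw [Finset.mem_erase]
      exact ⟨(( hmemS x).1 hx).1, Finset.mem_univ x⟩
    have h := Finset.card_le_card this
    rw [Finset.card_erase_of_mem (Finset.mem_univ 0), Finset.card_univ] at h
    have : (N:ℝ) ≤ (Fintype.card K - 1 : ℕ) := by exact_mod_cast h
    rw [hQdef]
    push_cast [Nat.cast_sub (by omega : 1 ≤ Fintype.card K)] at this ⊢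
    linarith
  have hkN : Q - 1 ≤ (k:ℝ) * N := by
    have hfiber : ∀ s : K, (Finset.univ.filter (fun z : K => z ^ k = s)).card ≤ k := by
      intro s
      have hpoly : (Polynomial.X ^ k - Polynomial.C s : Polynomial K) ≠ 0 :=
        Polynomial.X_pow_sub_C_ne_zero (by omega) s
      calc (Finset.univ.filter (fun z : K => z ^ k = s)).card
          ≤ (Polynomial.X ^ k - Polynomial.C s : Polynomial K).roots.toFinset.card := by
            apply Finset.card_le_card
            intro z hz
            rw [Finset.mem_filter] at hz
            rw [Multiset.mem_toFinset, Polynomial.mem_roots hpoly]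
            simp [Polynomial.IsRoot, hz.2]
        _ ≤ Multiset.card (Polynomial.X ^ k - Polynomial.C s : Polynomial K).roots :=
            Multiset.toFinset_card_le _
        _ ≤ (Polynomial.X ^ k - Polynomial.C s : Polynomial K).natDegree :=
            Polynomial.card_roots' _
        _ = k := by
            rw [Polynomial.natDegree_X_pow_sub_C]
    have hsub : Finset.univ.erase (0:K) ⊆
        S.biUnion (fun s => Finset.univ.filter (fun z : K => z ^ k = s)) := by
      intro z hz
      rw [Finset.mem_erase] at hz
      rw [Finset.mem_biUnion]
      exact ⟨z ^ k, (hmemS _).2 ⟨pow_ne_zero k hz.1, z, rfl⟩, by simp⟩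
    have h := (Finset.card_le_card hsub).trans
      ((Finset.card_biUnion_le).trans (Finset.sum_le_card_nsmul S _ k (fun s _ => hfiber s)))
    rw [Finset.card_erase_of_mem (Finset.mem_univ 0), Finset.card_univ, smul_eq_mul] at h
    have h2 : ((Fintype.card K - 1 : ℕ) : ℝ) ≤ ((N * k : ℕ) : ℝ) := by exact_mod_cast h
    rw [hQdef]
    push_cast [Nat.cast_sub (by omega : 1 ≤ Fintype.card K)] at h2 ⊢
    linarith
  -- the weight function
  set a : ℝ := 1 - (Q - T) / (N:ℝ) with hadef
  set f : K → ℝ := fun d => if d ∈ S then a else 1 with hfdef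
  have hf0 : f 0 = 1 := by simp [hfdef, hS0]
  have hfeven : ∀ d, f (-d) = f d := by
    intro d
    by_cases hd : d ∈ S
    · simp [hfdef, hd, hSneg d hd]
    · have : -d ∉ S := fun h => hd (by simpa using hSneg _ h)
      simp [hfdef, hd, this]
  set fhat : K → ℂ := fun b => ∑ d : K, (f d : ℂ) * ψ (d * b) with hfhatdef
  set Fc : K → ℝ := fun b => T - (fhat b).re with hFcdef
  -- Fourier computation
  have P1 : ∀ c : K, ∑ b : K, fhat b * ψ (b * c) = ((Q : ℝ) : ℂ) * ((f (-c) : ℝ) : ℂ) := by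
    intro c
    simp only [hfhatdef, Finset.sum_mul]
    rw [Finset.sum_comm]
    have h1 : ∀ d : K, ∑ b : K, (f d : ℂ) * ψ (d * b) * ψ (b * c)
        = (f d : ℂ) * (if d + c = 0 then (Fintype.card K : ℂ) else 0) := by
      intro d
      rw [← KS (d + c), Finset.mul_sum]
      apply Finset.sum_congr rfl
      intro b _
      rw [mul_assoc, ← AddChar.map_add_eq_mul]
      congr 2
      ring
    simp only [h1]
    rw [Finset.sum_eq_single (-c)]
    · rw [if_pos (by ring), hQdef]
      push_cast
      ring
    · intro d _ hd
      rw [if_neg (fun h => hd (by linear_combination h)), mul_zero]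
    · intro h
      exact absurd (Finset.mem_univ _) h
  have P2 : ∀ c : K, ∑ b : K, (starRingEnd ℂ) (fhat b) * ψ (b * c)
      = ((Q : ℝ) : ℂ) * ((f c : ℝ) : ℂ) := by
    intro c
    have hconjfhat : ∀ b : K, (starRingEnd ℂ) (fhat b) = ∑ d : K, (f d : ℂ) * ψ (-(d * b)) := by
      intro b
      rw [hfhatdef]
      rw [map_sum]
      apply Finset.sum_congr rfl
      intro d _
      rw [map_mul, Complex.conj_ofReal, hconj]
    simp only [hconjfhat, Finset.sum_mul]
    rw [Finset.sum_comm]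
    have h1 : ∀ d : K, ∑ b : K, (f d : ℂ) * ψ (-(d * b)) * ψ (b * c)
        = (f d : ℂ) * (if c - d = 0 then (Fintype.card K : ℂ) else 0) := by
      intro d
      rw [← KS (c - d), Finset.mul_sum]
      apply Finset.sum_congr rfl
      intro b _
      rw [mul_assoc, ← AddChar.map_add_eq_mul]
      congr 2
      ring
    simp only [h1]
    rw [Finset.sum_eq_single c]
    · rw [if_pos (by ring), hQdef]
      push_cast
      ring
    · intro d _ hd
      rw [if_neg (fun h => hd (by linear_combination -h)), mul_zero]
    · intro h
      exact absurd (Finset.mem_univ _) h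
  have C1 : ∀ c : K, ∑ b : K, (Fc b : ℂ) * ψ (b * c)
      = (((if c = 0 then Q * T else 0) - Q * f c : ℝ) : ℂ) := by
    intro c
    have hsplit : ∀ b : K, ((Fc b : ℝ) : ℂ) * ψ (b * c)
        = ((T : ℝ) : ℂ) * ψ (b * c) - (fhat b + (starRingEnd ℂ) (fhat b)) / 2 * ψ (b * c) := by
      intro b
      have h : ((Fc b : ℝ) : ℂ) = ((T : ℝ) : ℂ) - (fhat b + (starRingEnd ℂ) (fhat b)) / 2 := by
        rw [Complex.add_conj, hFcdef]
        push_cast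
        ring
      rw [h, sub_mul]
    simp only [hsplit]
    rw [Finset.sum_sub_distrib]
    have h2 : ∑ b : K, ((T:ℝ):ℂ) * ψ (b * c) = if c = 0 then ((Q*T : ℝ):ℂ) else 0 := by
      rw [← Finset.mul_sum, KS c]
      split_ifs
      · rw [hQdef]; push_cast; ring
      · rw [mul_zero]
    have h3 : ∑ b : K, (fhat b + (starRingEnd ℂ) (fhat b)) / 2 * ψ (b * c)
        = ((Q : ℝ):ℂ) * ((f c : ℝ):ℂ) := by
      have : ∀ b : K, (fhat b + (starRingEnd ℂ) (fhat b)) / 2 * ψ (b * c)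
          = (fhat b * ψ (b * c) + (starRingEnd ℂ) (fhat b) * ψ (b * c)) / 2 := by
        intro b; ring
      simp only [this]
      rw [← Finset.sum_div, Finset.sum_add_distrib, P1, P2, hfeven]
      ring
    rw [h2, h3]
    split_ifs <;> push_cast <;> ring
  -- nonnegativity of the weights
  have hfhatsplit : ∀ b : K, fhat b = (if b = 0 then (Fintype.card K : ℂ) else 0)
      + (((a - 1 : ℝ)) : ℂ) * (∑ s ∈ S, ψ (s * b)) := by
    intro b
    rw [hfhatdef]
    have h1 : ∀ d : K, (f d : ℂ) * ψ (d * b)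
        = ψ (d * b) + (if d ∈ S then ((a - 1 : ℝ) : ℂ) else 0) * ψ (d * b) := by
      intro d
      by_cases hd : d ∈ S
      · rw [if_pos hd, hfdef]
        simp only [if_pos hd]
        push_cast
        ring
      · rw [if_neg hd, hfdef]
        simp only [if_neg hd]
        push_cast
        ring
    simp only [h1]
    rw [Finset.sum_add_distrib, KS b]
    congr 1
    simp only [ite_mul, zero_mul]
    rw [Finset.sum_ite_mem, Finset.univ_inter, Finset.mul_sum]
  have hFc0 : ∀ b : K, 0 ≤ Fc b := by
    intro b
    by_cases hb : b = 0
    · -- here `Fc 0 = 0`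
      subst hb
      have h1 : fhat 0 = ((Q + (a - 1) * N : ℝ) : ℂ) := by
        rw [hfhatsplit 0, if_pos rfl]
        have h2 : ∑ s ∈ S, ψ (s * 0) = (N : ℂ) := by
          simp only [mul_zero, AddChar.map_zero_eq_one]
          rw [Finset.sum_const, hNdef, nsmul_eq_mul, mul_one]
        rw [h2, hQdef]
        push_cast
        ring
      have h3 : (a - 1) * (N : ℝ) = -(Q - T) := by
        rw [hadef]
        field_simp
        ring
      rw [hFcdef]
      simp only [h1, Complex.ofReal_re]
      nlinarith [h3]
    · -- the main case: `b ≠ 0`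
      -- the function `H` and its basic properties
      set H : K → ℂ := fun x => ∑ s ∈ S, ψ ((s * x) * b) with hHdef
      set G : ℝ := (∑ s ∈ S, ψ (s * b)).re with hGdef
      have hH1 : H 1 = ∑ s ∈ S, ψ (s * b) := by
        rw [hHdef]
        apply Finset.sum_congr rfl
        intro s _
        rw [mul_one]
      have KS2 : ∀ c : K, ∑ x : K, ψ ((c * x) * b) = if c = 0 then (Fintype.card K : ℂ) else 0 := by
        intro c
        by_cases hc : c = 0
        · simp only [hc, zero_mul, AddChar.map_zero_eq_one]
          rw [Finset.sum_const, Finset.card_univ, nsmul_eq_mul, mul_one]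
          simp
        · rw [if_neg hc]
          have he : ∑ x : K, ψ ((c * x) * b) = ∑ y : K, ψ (y * b) :=
            Fintype.sum_bijective (fun x => c * x) (mulLeft_bijective₀ c hc)
              (fun x => ψ ((c * x) * b)) (fun y => ψ (y * b)) (fun x => rfl)
          rw [he, KS b, if_neg hb]
      have cs1 : ∑ x : K, H x = 0 := by
        simp only [hHdef]
        rw [Finset.sum_comm]
        apply Finset.sum_eq_zero
        intro s hs
        have hs0 : s ≠ 0 := ((hmemS s).1 hs).1
        rw [KS2 s, if_neg hs0]
      have cs2 : ∑ x : K, H x * (starRingEnd ℂ) (H x) = ((Fintype.card K : ℂ)) * (N : ℂ) := by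
        have hexp : ∀ x : K, H x * (starRingEnd ℂ) (H x)
            = ∑ s ∈ S, ∑ t ∈ S, ψ (((s - t) * x) * b) := by
          intro x
          rw [hHdef]
          simp only [map_sum]
          rw [Finset.sum_mul_sum]
          apply Finset.sum_congr rfl
          intro s _
          apply Finset.sum_congr rfl
          intro t _
          rw [hconj, ← AddChar.map_add_eq_mul]
          congr 1
          ring
        simp only [hexp]
        rw [Finset.sum_comm]
        have hin : ∀ s ∈ S, ∑ x : K, ∑ t ∈ S, ψ (((s - t) * x) * b) = (Fintype.card K : ℂ) := by
          intro s hs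
          rw [Finset.sum_comm]
          have h4 : ∀ t ∈ S, ∑ x : K, ψ (((s - t) * x) * b)
              = if t = s then (Fintype.card K : ℂ) else 0 := by
            intro t _
            rw [KS2 (s - t)]
            by_cases hts : t = s
            · rw [if_pos (by rw [hts, sub_self]), if_pos hts]
            · rw [if_neg (fun h => hts (by linear_combination -h)), if_neg hts]
          rw [Finset.sum_congr rfl h4, Finset.sum_ite_eq' S s
            (fun _ => (Fintype.card K : ℂ)), if_pos hs]
        rw [Finset.sum_congr rfl hin, Finset.sum_const, hNdef, nsmul_eq_mul, mul_comm]
      have cs3 : ∀ x ∈ S, H x = H 1 := by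
        intro x hx
        rw [hHdef]
        refine Finset.sum_nbij' (fun s => s * x) (fun t => t * x⁻¹) ?_ ?_ ?_ ?_ ?_
        · intro s hs
          exact hSmul s hs x hx
        · intro t ht
          exact hSmul t ht x⁻¹ (hSinv x hx)
        · intro s _
          have hx0 : x ≠ 0 := ((hmemS x).1 hx).1
          field_simp
        · intro t _
          have hx0 : x ≠ 0 := ((hmemS x).1 hx).1
          field_simp
        · intro s _
          congr 1
          ring
      -- the real quantities
      have hg0 : (H 0).re = (N : ℝ) := by
        have : H 0 = (N : ℂ) := by
          rw [hHdef]
          simp only [mul_zero, zero_mul, AddChar.map_zero_eq_one]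
          rw [Finset.sum_const, hNdef, nsmul_eq_mul, mul_one]
        rw [this, Complex.natCast_re]
      have hg1 : (H 1).re = G := by rw [hH1, hGdef]
      have hsumg : ∑ x : K, (H x).re = 0 := by
        rw [← Complex.re_sum, cs1, Complex.zero_re]
      have hsumnorm : ∑ x : K, Complex.normSq (H x) = Q * N := by
        have h5 : ∀ x : K, H x * (starRingEnd ℂ) (H x) = ((Complex.normSq (H x) : ℝ) : ℂ) := by
          intro x
          rw [Complex.mul_conj]
        have h6 := cs2
        simp only [h5] at h6
        have h7 : ((∑ x : K, Complex.normSq (H x) : ℝ) : ℂ) = ((Q * N : ℝ) : ℂ) := by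
          push_cast at h6 ⊢
          rw [h6, hQdef]
          push_cast
          ring
        exact_mod_cast h7
      -- split the sums
      set R : Finset K := Finset.univ \ insert (0 : K) S with hRdef
      have hins : insert (0 : K) S ⊆ Finset.univ := Finset.subset_univ _
      have hcardins : (insert (0 : K) S).card = N + 1 := by
        rw [Finset.card_insert_of_notMem hS0, hNdef]
      have hcardR : (R.card : ℝ) = Q - 1 - N := by
        rw [hRdef, Finset.card_sdiff_of_subset hins, Finset.card_univ, hcardins]
        have hle : N + 1 ≤ Fintype.card K := by
          rw [← hcardins]
          exact Finset.card_le_card hins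
        rw [hQdef]
        push_cast [Nat.cast_sub hle]
        ring
      have hsum_ins : ∑ x ∈ insert (0 : K) S, (H x).re = (N : ℝ) + N * G := by
        rw [Finset.sum_insert hS0, hg0]
        have h8 : ∑ x ∈ S, (H x).re = (N : ℝ) * G := by
          have h9 : ∀ x ∈ S, (H x).re = G := by
            intro x hx
            rw [cs3 x hx, hg1]
          rw [Finset.sum_congr rfl h9, Finset.sum_const, hNdef, nsmul_eq_mul]
        rw [h8]
      have hA : ∑ x ∈ R, (H x).re = -(N : ℝ) - N * G := by
        have h10 := Finset.sum_sdiff (f := fun x => (H x).re) hins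
        rw [hsum_ins, hsumg] at h10
        rw [hRdef]
        linarith
      have hB : ∑ x ∈ R, ((H x).re) ^ 2 ≤ Q * N - (N : ℝ) ^ 2 - N * G ^ 2 := by
        have h11 : ∑ x ∈ R, Complex.normSq (H x)
            = Q * N - Complex.normSq (H 0) - ∑ x ∈ S, Complex.normSq (H x) := by
          have h12 := Finset.sum_sdiff (f := fun x => Complex.normSq (H x)) hins
          rw [hsumnorm, Finset.sum_insert hS0] at h12
          rw [hRdef]
          linarith
        have h13 : Complex.normSq (H 0) = (N : ℝ) ^ 2 := by
          have h14 : Complex.normSq (H 0) = (H 0).re ^ 2 + (H 0).im ^ 2 := by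
            rw [Complex.normSq_apply]; ring
          have h15 : (H 0).im = 0 := by
            have : H 0 = (N : ℂ) := by
              rw [hHdef]
              simp only [mul_zero, zero_mul, AddChar.map_zero_eq_one]
              rw [Finset.sum_const, hNdef, nsmul_eq_mul, mul_one]
            rw [this, Complex.natCast_im]
          rw [h14, h15, hg0]
          ring
        have h16 : ∑ x ∈ S, Complex.normSq (H x) ≥ (N : ℝ) * G ^ 2 := by
          have h17 : ∀ x ∈ S, G ^ 2 ≤ Complex.normSq (H x) := by
            intro x hx
            rw [cs3 x hx, Complex.normSq_apply, ← hg1]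
            nlinarith [sq_nonneg (H 1).im]
          calc (N : ℝ) * G ^ 2 = ∑ _x ∈ S, G ^ 2 := by
                rw [Finset.sum_const, hNdef, nsmul_eq_mul]
            _ ≤ _ := Finset.sum_le_sum h17
        have h18 : ∑ x ∈ R, ((H x).re) ^ 2 ≤ ∑ x ∈ R, Complex.normSq (H x) := by
          apply Finset.sum_le_sum
          intro x _
          rw [Complex.normSq_apply]
          nlinarith [sq_nonneg (H x).im]
        linarith
      have hCS := sq_sum_le_card_mul_sum_sq (s := R) (f := fun x => (H x).re)
      have h1 : ((N : ℝ) + N * G) ^ 2 ≤ (Q - 1 - N) * (Q * N - (N : ℝ) ^ 2 - N * G ^ 2) := by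
        rw [hA] at hCS
        have h19 : (-(N:ℝ) - N * G) ^ 2 = ((N:ℝ) + N * G) ^ 2 := by ring
        rw [h19] at hCS
        calc ((N : ℝ) + N * G) ^ 2 ≤ (R.card : ℝ) * ∑ x ∈ R, ((H x).re) ^ 2 := hCS
          _ ≤ (Q - 1 - N) * (Q * N - (N : ℝ) ^ 2 - N * G ^ 2) := by
              rw [hcardR]
              apply mul_le_mul_of_nonneg_left hB
              rw [← hcardR]
              positivity
      have hG : -((N : ℝ) + (Q - 1 - N) * Real.sqrt Q) ≤ (Q - 1) * G :=
        paley_aux_quad (by exact_mod_cast hN1) hNQ h1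
      -- combine with the elementary inequality
      have hL2 : (1 + ((k : ℝ) - 1) * Real.sqrt Q) * (Q - T) ≤ T * (Q - 1) := by
        rw [hTdef]
        exact paley_aux_L2 hk (by linarith)
      have hstep : (N : ℝ) + (Q - 1 - N) * Real.sqrt Q
          ≤ (N : ℝ) * (1 + ((k : ℝ) - 1) * Real.sqrt Q) := by
        have h20 : Q - 1 - (N:ℝ) ≤ (N:ℝ) * ((k:ℝ) - 1) := by nlinarith [hkN]
        have h21 := mul_le_mul_of_nonneg_right h20 (Real.sqrt_nonneg Q)
        nlinarith [h21]
      have hQTpos : (0:ℝ) ≤ Q - T := by linarith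
      have hfinal : (Q - 1) * ((Q - T) * (-G)) ≤ (Q - 1) * (T * (N : ℝ)) := by
        calc (Q - 1) * ((Q - T) * (-G)) = (Q - T) * ((Q - 1) * (-G)) := by ring
          _ ≤ (Q - T) * ((N : ℝ) + (Q - 1 - N) * Real.sqrt Q) :=
              mul_le_mul_of_nonneg_left (by linarith [hG]) hQTpos
          _ ≤ (Q - T) * ((N : ℝ) * (1 + ((k : ℝ) - 1) * Real.sqrt Q)) :=
              mul_le_mul_of_nonneg_left hstep hQTpos
          _ = (N : ℝ) * ((1 + ((k : ℝ) - 1) * Real.sqrt Q) * (Q - T)) := by ring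
          _ ≤ (N : ℝ) * (T * (Q - 1)) := mul_le_mul_of_nonneg_left hL2 (le_of_lt hN0)
          _ = (Q - 1) * (T * (N : ℝ)) := by ring
      have h5 : (Q - T) * (-G) ≤ T * (N : ℝ) :=
        le_of_mul_le_mul_left (by linarith [hfinal]) (by linarith : (0:ℝ) < Q - 1)
      have ha1 : (a - 1) * G ≤ T := by
        have h6 : (Q - T) * (-G) / (N : ℝ) ≤ T := by
          rw [div_le_iff₀ hN0]
          nlinarith [h5, hN0]
        calc (a - 1) * G = (Q - T) * (-G) / (N : ℝ) := by
              rw [hadef]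
              field_simp
              ring
          _ ≤ T := h6
      have h7 : (fhat b).re = (a - 1) * G := by
        rw [hfhatsplit b, if_neg hb]
        rw [Complex.add_re, Complex.zero_re, Complex.re_ofReal_mul, hGdef]
        ring
      have h8 : Fc b = T - (fhat b).re := by simp only [hFcdef]
      rw [h8, h7]
      linarith
  -- the vectors
  set E := PiLp 2 (fun _ : Option K => ℂ) with hEdef
  set s0 : ℝ := (Real.sqrt T)⁻¹ with hs0def
  set cb : K → ℝ := fun b => Real.sqrt (Fc b) / Real.sqrt (Q * T) with hcbdef
  set U : K → E := fun x => (WithLp.equiv 2 (∀ _ : Option K, ℂ)).symm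
    (fun i => Option.elim i ((s0 : ℝ) : ℂ)
      (fun b => ((cb b : ℝ) : ℂ) * ψ (b * x))) with hUdef
  set C : E := (WithLp.equiv 2 (∀ _ : Option K, ℂ)).symm
    (fun i => Option.elim i (1:ℂ) (fun _ => 0)) with hCdef
  have hQT0 : (0:ℝ) < Q * T := by positivity
  have hinner : ∀ x y : K, ⟪U x, U y⟫ =
      (if x = y then 1 else 0) - f (y - x) / T + 1 / T := by
    intro x y
    rw [PiLp.inner_apply, Fintype.sum_option]
    have hnone : (⟪(U x) none, (U y) none⟫ : ℝ) = 1 / T := by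
      simp only [hUdef, WithLp.equiv_symm_apply, PiLp.toLp_apply, Option.elim]
      rw [Complex.inner, Complex.conj_ofReal, ← Complex.ofReal_mul, Complex.ofReal_re,
        hs0def]
      rw [← Real.sqrt_inv]
      rw [Real.mul_self_sqrt (by positivity)]
      rw [one_div]
    have hterm : ∀ b : K, (⟪(U x) (some b), (U y) (some b)⟫ : ℝ)
        = (Fc b / (Q * T)) * (ψ (b * (y - x))).re := by
      intro b
      simp only [hUdef, WithLp.equiv_symm_apply, PiLp.toLp_apply, Option.elim]
      rw [Complex.inner, map_mul (starRingEnd ℂ), Complex.conj_ofReal, hconj,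
        mul_comm ((cb b : ℂ) * ψ (b * y))]
      have h1 : (cb b : ℂ) * ψ (-(b * x)) * ((cb b : ℂ) * ψ (b * y))
          = ((cb b * cb b : ℝ) : ℂ) * ψ (b * (y - x)) := by
        rw [show ψ (b * (y-x)) = ψ (-(b*x)) * ψ (b*y) by
          rw [← AddChar.map_add_eq_mul]; congr 1; ring]
        push_cast
        ring
      rw [h1, Complex.re_ofReal_mul]
      congr 1
      rw [hcbdef]
      rw [div_mul_div_comm, Real.mul_self_sqrt (hFc0 b), Real.mul_self_sqrt (le_of_lt hQT0)]
    have hsum : ∑ b : K, (⟪(U x) (some b), (U y) (some b)⟫ : ℝ)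
        = (if x = y then 1 else 0) - f (y - x) / T := by
      simp only [hterm]
      have h2 : ∀ b : K, (Fc b / (Q*T)) * (ψ (b * (y-x))).re
          = (1/(Q*T)) * ((Fc b : ℂ) * ψ (b * (y-x))).re := by
        intro b; rw [Complex.re_ofReal_mul]; ring
      simp only [h2]
      rw [← Finset.mul_sum, ← Complex.re_sum, C1 (y - x), Complex.ofReal_re]
      by_cases hxy : x = y
      · subst hxy
        rw [sub_self, if_pos rfl, if_pos rfl, hf0]
        field_simp
      · have hne : y - x ≠ 0 := sub_ne_zero.2 (Ne.symm hxy)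
        rw [if_neg hne, if_neg hxy]
        field_simp
        ring
    rw [hnone, hsum]
    ring
  have hCU : ∀ x : K, ⟪C, U x⟫ = s0 := by
    intro x
    rw [PiLp.inner_apply, Fintype.sum_option]
    have h1 : (⟪(C : E) none, (U x) none⟫ : ℝ) = s0 := by
      simp only [hUdef, hCdef, WithLp.equiv_symm_apply, PiLp.toLp_apply, Option.elim]
      rw [Complex.inner]
      simp
    have h2 : ∀ b : K, (⟪(C : E) (some b), (U x) (some b)⟫ : ℝ) = 0 := by
      intro b
      simp only [hUdef, hCdef, WithLp.equiv_symm_apply, PiLp.toLp_apply, Option.elim]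
      rw [Complex.inner]
      simp
    simp only [h2, h1, Finset.sum_const_zero, add_zero]
  have hnorm1 : ∀ v : E, ⟪v, v⟫ = 1 → ‖v‖ = 1 := by
    intro v hv
    have h := real_inner_self_eq_norm_sq v
    have h2 : Real.sqrt (‖v‖ ^ 2) = ‖v‖ := Real.sqrt_sq (norm_nonneg v)
    rw [← h2, ← h, hv, Real.sqrt_one]
  have hCC : ‖C‖ = 1 := by
    apply hnorm1
    rw [PiLp.inner_apply, Fintype.sum_option]
    have h1 : (⟪(C : E) none, (C : E) none⟫ : ℝ) = 1 := by
      simp only [hCdef, WithLp.equiv_symm_apply, PiLp.toLp_apply, Option.elim]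
      rw [Complex.inner]; simp
    have h2 : ∀ b : K, (⟪(C : E) (some b), (C : E) (some b)⟫ : ℝ) = 0 := by
      intro b
      simp only [hCdef, WithLp.equiv_symm_apply, PiLp.toLp_apply, Option.elim]
      rw [Complex.inner]; simp
    simp only [h1, h2, Finset.sum_const_zero, add_zero]
  have hUnorm : ∀ x : K, ‖U x‖ = 1 := by
    intro x
    apply hnorm1
    rw [hinner x x, sub_self, hf0, if_pos rfl]
    field_simp
    ring
  have horth : ∀ x y : K, x ≠ y → ¬(x ≠ y ∧ ∃ z : K, x - y = z ^ k) → ⟪U x, U y⟫ = 0 := by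
    intro x y hxy hnadj
    rw [hinner x y]
    have h1 : y - x ∉ S := by
      intro hmem
      rw [hmemS] at hmem
      obtain ⟨-, w, hw⟩ := hmem
      exact hnadj ⟨hxy, z₀ * w, by rw [mul_pow, hz₀, hw, neg_one_mul, neg_sub]⟩
    have h2 : f (y - x) = 1 := by simp [hfdef, h1]
    rw [h2, if_neg hxy]
    ring
  -- conclusion
  apply csInf_le
  · refine ⟨0, fun t ht => ?_⟩
    obtain ⟨d, u, c, hu, hc, -, hval⟩ := ht
    have h1 := hval 0
    nlinarith [sq_nonneg (⟪c, u 0⟫)]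
  · refine ⟨Module.finrank ℝ E, fun x => (stdOrthonormalBasis ℝ E).repr (U x),
      (stdOrthonormalBasis ℝ E).repr C, ?_, ?_, ?_, ?_⟩
    · intro v; rw [LinearIsometryEquiv.norm_map]; exact hUnorm v
    · rw [LinearIsometryEquiv.norm_map]; exact hCC
    · intro v w hvw hadj
      rw [LinearIsometryEquiv.inner_map_map]
      exact horth v w hvw hadj
    · intro v
      rw [LinearIsometryEquiv.inner_map_map, hCU v]
      have : ((Real.sqrt T)⁻¹) ^ 2 = T⁻¹ := by
        rw [inv_pow, Real.sq_sqrt (le_of_lt hT0)]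
      rw [this, mul_inv_cancel₀ (ne_of_gt hT0)]
end

section
/- Let q be an odd prime power with q ≡ 1 (mod 4). Then α(Paley_2(F_q) ⊠ Paley_2(F_q)) = q: the 2-fold strong product of the Paley graph with itself has independence number exactly q. -/
/-- The independence number of a graph given by an adjacency relation. -/
noncomputable def indepNumber {V : Type*} (Adj : V → V → Prop) : ℕ :=
  sSup {n : ℕ | ∃ S : Finset V, (∀ x ∈ S, ∀ y ∈ S, x ≠ y → ¬ Adj x y) ∧ S.card = n}

open Finset AddChar MulChar

section Aux
variable {K : Type*} [Field K] [Fintype K]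

private lemma paley_lower (q : ℕ) (hq : Fintype.card K = q) (h4 : q % 4 = 1) :
    ∃ S : Finset (K × K), (∀ x ∈ S, ∀ y ∈ S, x ≠ y → ¬ (x ≠ y ∧
        (x.1 = y.1 ∨ ∃ z : K, x.1 - y.1 = z ^ 2 ∧ z ≠ 0) ∧
        (x.2 = y.2 ∨ ∃ z : K, x.2 - y.2 = z ^ 2 ∧ z ≠ 0))) ∧ S.card = q := by
  classical
  have hq2 : 2 ≤ q := hq ▸ Fintype.one_lt_card
  have hchar : ringChar K ≠ 2 := by
    intro h
    have h2 := FiniteField.even_card_iff_char_two.mp h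
    rw [hq] at h2
    omega
  obtain ⟨β, hβ⟩ := FiniteField.exists_nonsquare (F := K) hchar
  have hβ0 : β ≠ 0 := fun h => hβ (h ▸ ⟨0, by simp⟩)
  refine ⟨Finset.univ.image (fun x : K => (x, β * x)), ?_, ?_⟩
  · rintro p hp r hr hne hadj
    simp only [Finset.mem_image, Finset.mem_univ, true_and] at hp hr
    obtain ⟨x, rfl⟩ := hp
    obtain ⟨y, rfl⟩ := hr
    obtain ⟨-, h1, h2⟩ := hadj
    have hxy : x ≠ y := fun h => hne (by rw [h])
    rcases h1 with h1 | ⟨z, hz, hz0⟩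
    · exact hxy h1
    rcases h2 with h2 | ⟨z', hz', hz'0⟩
    · exact hxy (mul_left_cancel₀ hβ0 h2)
    apply hβ
    refine ⟨z' * z⁻¹, ?_⟩
    have : β * (x - y) = z' ^ 2 := by
      simpa [mul_sub] using hz'
    field_simp
    rw [hz] at this
    linear_combination this
  · rw [Finset.card_image_of_injective _ (fun x y h => congrArg Prod.fst h),
      Finset.card_univ, hq]

set_option maxHeartbeats 1000000 in
private lemma paley_upper (q : ℕ) (hq : Fintype.card K = q) (h4 : q % 4 = 1)
    (S : Finset (K × K))
    (hS : ∀ x ∈ S, ∀ y ∈ S, x ≠ y → ¬ (x ≠ y ∧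
        (x.1 = y.1 ∨ ∃ z : K, x.1 - y.1 = z ^ 2 ∧ z ≠ 0) ∧
        (x.2 = y.2 ∨ ∃ z : K, x.2 - y.2 = z ^ 2 ∧ z ≠ 0))) :
    S.card ≤ q := by
  classical
  have hq2 : 2 ≤ q := hq ▸ Fintype.one_lt_card
  have hq5 : 5 ≤ q := by omega
  have hq5R : (5:ℝ) ≤ (q:ℝ) := by exact_mod_cast hq5
  have hqR : (0:ℝ) < (q:ℝ) := by positivity
  have hqC : (q:ℂ) ≠ 0 := by
    exact_mod_cast Nat.cast_ne_zero.mpr (by omega)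
  have hchar : ringChar K ≠ 2 := by
    intro h
    have h2 := FiniteField.even_card_iff_char_two.mp h
    rw [hq] at h2
    omega
  -- characters
  set χ : MulChar K ℂ := (quadraticChar K).ringHomComp (Int.castRingHom ℂ) with hχdef
  have hχ1 : χ ≠ 1 :=
    (MulChar.ringHomComp_ne_one_iff Int.cast_injective).mpr (quadraticChar_ne_one hchar)
  have hχq : χ.IsQuadratic := (quadraticChar_isQuadratic K).comp _
  set ψ := FiniteField.primitiveChar_to_Complex K with hψdef
  have hψ : ψ.IsPrimitive := FiniteField.primitiveChar_to_Complex_isPrimitive K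
  set g := gaussSum χ ψ with hgdef
  have hg2 : g ^ 2 = (q:ℂ) := by
    rw [hgdef, gaussSum_sq hχ1 hχq hψ]
    have hneg : χ (-1) = 1 := by
      show (((quadraticChar K) (-1) : ℤ) : ℂ) = 1
      rw [quadraticChar_neg_one hchar, hq, ZMod.χ₄_nat_one_mod_four h4]
      norm_num
    rw [hneg, one_mul, hq]
  -- `g` is real
  obtain ⟨G, hG⟩ : ∃ G : ℝ, (G : ℂ) = g := by
    have hsq : ((Real.sqrt q : ℝ) : ℂ) ^ 2 = (q:ℂ) := by
      rw [← Complex.ofReal_pow, Real.sq_sqrt hqR.le]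
      norm_num
    have h0 : (g - Real.sqrt q) * (g + Real.sqrt q) = 0 := by
      have : g ^ 2 - ((Real.sqrt q : ℝ) : ℂ) ^ 2 = 0 := by rw [hg2, hsq, sub_self]
      linear_combination this
    rcases mul_eq_zero.mp h0 with h | h
    · exact ⟨Real.sqrt q, (sub_eq_zero.mp h).symm⟩
    · have hgg : g = -((Real.sqrt q : ℝ) : ℂ) := eq_neg_of_add_eq_zero_left h
      exact ⟨-Real.sqrt q, by rw [hgg, Complex.ofReal_neg]⟩
  have hG2 : G ^ 2 = (q:ℝ) := by
    have : ((G:ℂ)) ^ 2 = ((q:ℝ) : ℂ) := by rw [hG, hg2]; norm_num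
    exact_mod_cast this
  set s := |G| with hsdef
  have hs0 : 0 ≤ s := abs_nonneg G
  have hs2 : s ^ 2 = (q:ℝ) := by rw [hsdef, sq_abs, hG2]
  have hGle : -s ≤ G := neg_abs_le G
  have hGle' : G ≤ s := le_abs_self G
  have hs1 : 1 ≤ s := by nlinarith [hs2, hs0, hq5R]
  set a : ℝ := 1 / (s + 1) with hadef
  set b : ℝ := (s - 1) / (s + 1) with hbdef
  have hsp : (0:ℝ) < s + 1 := by linarith
  have ha0 : 0 ≤ a := by positivity
  have hb0 : 0 ≤ b := div_nonneg (by linarith) hsp.le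
  have hab : 2 * a + b = 1 := by rw [hadef, hbdef]; field_simp; ring
  have h1ab : a * (1 - s) + b = 0 := by rw [hadef, hbdef]; field_simp; ring
  -- the weight function
  set w : K → ℝ := fun t =>
    (a * ((if t = 0 then (q:ℝ) else 0) + G * ((quadraticChar K t : ℤ) : ℝ) + 1) + b) / q with hwdef
  have hwval : ∀ t, w t =
      (a * ((if t = 0 then (q:ℝ) else 0) + G * ((quadraticChar K t : ℤ) : ℝ) + 1) + b) / q :=
    fun t => rfl
  have hcbound : ∀ t : K, -s ≤ G * ((quadraticChar K t : ℤ) : ℝ) := by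
    intro t
    rcases eq_or_ne t 0 with rfl | ht
    · rw [MulChar.map_zero]
      push_cast
      nlinarith
    · rcases quadraticChar_dichotomy (F := K) ht with h | h
      · rw [h]; push_cast; linarith
      · rw [h]; push_cast; linarith
  have hw : ∀ t, 0 ≤ w t := by
    intro t
    rw [hwval t]
    have h2 : 0 ≤ (if t = 0 then (q:ℝ) else 0) := by positivity
    apply div_nonneg _ hqR.le
    have e1 : 0 ≤ a * (if t = 0 then (q:ℝ) else 0) := mul_nonneg ha0 h2
    have e2 : a * (1 - s) ≤ a * (G * ((quadraticChar K t : ℤ) : ℝ) + 1) :=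
      mul_le_mul_of_nonneg_left (by linarith [hcbound t]) ha0
    have expand : a * ((if t = 0 then (q:ℝ) else 0) + G * ((quadraticChar K t : ℤ) : ℝ) + 1) + b
        = a * (if t = 0 then (q:ℝ) else 0) + (a * (G * ((quadraticChar K t : ℤ) : ℝ) + 1) + b) := by
      ring
    rw [expand]
    linarith
  have hw0 : w 0 = s / q := by
    have h1 : a * ((q:ℝ) + 1) + b = s := by
      rw [hadef, hbdef, ← hs2]; field_simp; ring
    rw [hwval 0, if_pos rfl, MulChar.map_zero]
    push_cast
    rw [mul_zero, add_zero, h1]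
  -- conjugation of ψ
  have hRpos : 0 < ringChar K := Nat.pos_of_ne_zero (CharP.ringChar_ne_zero_of_finite K)
  have hconj : ∀ z : K, (starRingEnd ℂ) (ψ z) = ψ (-z) := by
    intro z
    rw [AddChar.starComp_apply hRpos, AddChar.inv_apply]
  have hL1 : ∀ u : K, ∑ t, ψ (t * u) = if u = 0 then (q:ℂ) else 0 := by
    intro u
    rw [AddChar.sum_mulShift u hψ, hq]
    split_ifs <;> simp
  have hL2 : ∀ u : K, ∑ t, χ t * ψ (t * u) = χ u * g := by
    intro u
    rcases eq_or_ne u 0 with rfl | hu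
    · simp only [mul_zero, AddChar.map_zero_eq_one, mul_one]
      rw [MulChar.sum_eq_zero_of_ne_one hχ1, MulChar.map_zero, zero_mul]
    · have h := gaussSum_mulShift χ ψ (Units.mk0 u hu)
      have h2 : gaussSum χ (AddChar.mulShift ψ ((Units.mk0 u hu : Kˣ) : K))
          = ∑ t, χ t * ψ (t * u) := by
        unfold gaussSum
        refine Finset.sum_congr rfl fun t _ => ?_
        rw [AddChar.mulShift_apply]
        norm_num [mul_comm]
      rw [h2] at h
      have huu : χ u * χ u = 1 := by
        rcases hχq u with h0 | h1 | hm
        · exfalso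
          apply hu
          rw [hχdef, MulChar.ringHomComp_apply] at h0
          simp only [Int.coe_castRingHom] at h0
          have : (quadraticChar K u : ℤ) = 0 := by exact_mod_cast h0
          exact quadraticChar_eq_zero_iff.mp this
        · rw [h1]; norm_num
        · rw [hm]; norm_num
      calc ∑ t, χ t * ψ (t * u) = (χ u * χ u) * ∑ t, χ t * ψ (t * u) := by
            rw [huu, one_mul]
        _ = χ u * (χ u * ∑ t, χ t * ψ (t * u)) := by ring
        _ = χ u * g := by
            have h' : χ u * ∑ t, χ t * ψ (t * u) = g := by simpa using h
            rw [h']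
  have hGG : G * G = (q:ℝ) := by rw [← pow_two]; exact hG2
  have hGg : (G:ℂ) * g = (q:ℂ) := by
    rw [← hG]
    exact_mod_cast hGG
  -- the orthonormal representation vectors (one coordinate)
  set ux : K → K → ℂ := fun x t => ((Real.sqrt (w t) : ℝ) : ℂ) * ψ (t * x) with huxdef
  have hMain : ∀ x y : K, ∑ t, (starRingEnd ℂ) (ux x t) * ux y t
      = (a:ℂ) * (1 + χ (y - x)) + (if y = x then (((a:ℝ) + b : ℝ) : ℂ) else 0) := by
    intro x y
    have step : ∀ t : K, (starRingEnd ℂ) (ux x t) * ux y t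
        = ((w t : ℝ) : ℂ) * ψ (t * (y - x)) := by
      intro t
      simp only [huxdef]
      rw [map_mul, Complex.conj_ofReal, hconj]
      have hψm : ψ (-(t * x)) * ψ (t * y) = ψ (t * (y - x)) := by
        rw [← AddChar.map_add_eq_mul]
        ring_nf
      have hww : ((Real.sqrt (w t) : ℝ) : ℂ) * ((Real.sqrt (w t) : ℝ) : ℂ) = ((w t : ℝ) : ℂ) := by
        rw [← Complex.ofReal_mul, Real.mul_self_sqrt (hw t)]
      calc ((Real.sqrt (w t) : ℝ) : ℂ) * ψ (-(t * x)) * (((Real.sqrt (w t) : ℝ) : ℂ) * ψ (t * y))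
          = (((Real.sqrt (w t) : ℝ) : ℂ) * ((Real.sqrt (w t) : ℝ) : ℂ))
            * (ψ (-(t * x)) * ψ (t * y)) := by ring
        _ = ((w t : ℝ) : ℂ) * ψ (t * (y - x)) := by rw [hww, hψm]
    simp only [step]
    have expand : ∀ t : K, ((w t : ℝ) : ℂ) * ψ (t * (y - x))
        = ((a:ℂ) * ((if t = 0 then (q:ℂ) else 0) * ψ (t * (y - x))
            + (G:ℂ) * (χ t * ψ (t * (y - x))) + ψ (t * (y - x)))
           + (b:ℂ) * ψ (t * (y - x))) / (q:ℂ) := by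
      intro t
      rw [hwval t]
      have hcast : (((a * ((if t = 0 then (q:ℝ) else 0) + G * ((quadraticChar K t : ℤ) : ℝ) + 1)
            + b) / q : ℝ) : ℂ)
          = ((a:ℂ) * ((if t = 0 then (q:ℂ) else 0) + (G:ℂ) * χ t + 1) + (b:ℂ)) / (q:ℂ) := by
        simp only [hχdef, MulChar.ringHomComp_apply, Int.coe_castRingHom]
        push_cast [apply_ite (fun r : ℝ => (r:ℂ))]
        ring
      rw [hcast]
      ring
    rw [Finset.sum_congr rfl fun t (_ : t ∈ Finset.univ) => expand t, ← Finset.sum_div]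
    have hA : ∑ t : K, (if t = 0 then (q:ℂ) else 0) * ψ (t * (y - x)) = (q:ℂ) := by
      simp only [ite_mul, zero_mul]
      rw [Finset.sum_ite_eq' Finset.univ (0:K)]
      simp
    have hsum : ∑ t : K, ((a:ℂ) * ((if t = 0 then (q:ℂ) else 0) * ψ (t * (y - x))
            + (G:ℂ) * (χ t * ψ (t * (y - x))) + ψ (t * (y - x)))
           + (b:ℂ) * ψ (t * (y - x)))
        = (a:ℂ) * ((q:ℂ) + (G:ℂ) * (χ (y - x) * g) + (if y - x = 0 then (q:ℂ) else 0))
          + (b:ℂ) * (if y - x = 0 then (q:ℂ) else 0) := by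
      rw [Finset.sum_add_distrib, ← Finset.mul_sum, ← Finset.mul_sum,
        Finset.sum_add_distrib, Finset.sum_add_distrib, ← Finset.mul_sum,
        hA, hL2, hL1]
    rw [hsum]
    rcases eq_or_ne y x with rfl | hyx
    · rw [sub_self, if_pos rfl, if_pos rfl, MulChar.map_zero]
      push_cast
      field_simp
      ring
    · rw [if_neg (sub_ne_zero.mpr hyx), if_neg hyx]
      have : (G:ℂ) * (χ (y - x) * g) = χ (y - x) * (q:ℂ) := by
        rw [← hGg]; ring
      rw [this]
      field_simp
      ring
  have hNorm : ∀ x : K, ∑ t, (starRingEnd ℂ) (ux x t) * ux x t = 1 := by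
    intro x
    rw [hMain x x, sub_self, MulChar.map_zero, if_pos rfl]
    have habC : 2 * (a:ℂ) + (b:ℂ) = 1 := by exact_mod_cast congrArg (fun r : ℝ => (r:ℂ)) hab
    push_cast
    linear_combination habC
  have hOrtho : ∀ x y : K, quadraticChar K (y - x) = -1 →
      ∑ t, (starRingEnd ℂ) (ux x t) * ux y t = 0 := by
    intro x y h
    have hyx : y ≠ x := by
      intro e
      rw [e, sub_self, MulChar.map_zero] at h
      exact absurd h (by norm_num)
    rw [hMain x y, if_neg hyx]
    have hχv : χ (y - x) = -1 := by
      rw [hχdef, MulChar.ringHomComp_apply, h]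
      norm_num
    rw [hχv]
    ring
  -- the tensored orthonormal representation
  set U : K × K → EuclideanSpace ℂ (K × K) :=
    fun p => WithLp.toLp 2 (fun t : K × K => ux p.1 t.1 * ux p.2 t.2) with hUdef
  have hUinner : ∀ p r : K × K, (inner ℂ (U p) (U r) : ℂ)
      = (∑ t1, (starRingEnd ℂ) (ux p.1 t1) * ux r.1 t1)
        * (∑ t2, (starRingEnd ℂ) (ux p.2 t2) * ux r.2 t2) := by
    intro p r
    rw [PiLp.inner_apply]
    simp only [RCLike.inner_apply]
    rw [Fintype.sum_prod_type, Finset.sum_mul_sum]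
    refine Finset.sum_congr rfl fun t1 _ => Finset.sum_congr rfl fun t2 _ => ?_
    simp only [hUdef, map_mul]
    ring
  have hON : Orthonormal ℂ (fun i : {x // x ∈ S} => U (i : K × K)) := by
    rw [orthonormal_iff_ite]
    intro i j
    rcases eq_or_ne i j with rfl | hij
    · rw [if_pos rfl, hUinner, hNorm, hNorm, one_mul]
    · rw [if_neg hij, hUinner]
      have hne : (i : K × K) ≠ (j : K × K) := fun h => hij (Subtype.ext h)
      have hnadj := hS i i.2 j j.2 hne
      have h2 : ¬((((i : K × K)).1 = ((j : K × K)).1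
            ∨ ∃ z : K, ((i : K × K)).1 - ((j : K × K)).1 = z ^ 2 ∧ z ≠ 0) ∧
          (((i : K × K)).2 = ((j : K × K)).2
            ∨ ∃ z : K, ((i : K × K)).2 - ((j : K × K)).2 = z ^ 2 ∧ z ≠ 0)) :=
        fun hc => hnadj ⟨hne, hc⟩
      have hkey : ∀ x y : K, ¬(x = y ∨ ∃ z : K, x - y = z ^ 2 ∧ z ≠ 0) →
          quadraticChar K (y - x) = -1 := by
        intro x y hxy
        push_neg at hxy
        obtain ⟨hne', hz⟩ := hxy
        apply quadraticChar_neg_one_iff_not_isSquare.mpr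
        rintro ⟨z, hzz⟩
        obtain ⟨c, hc⟩ : IsSquare (-1 : K) := by
          apply FiniteField.isSquare_neg_one_iff.mpr
          rw [hq]; omega
        have hzeq : x - y = (c * z) ^ 2 := by linear_combination z * z * hc - hzz
        have hz0 : c * z = 0 := hz _ hzeq
        rcases mul_eq_zero.mp hz0 with h | h
        · rw [h] at hc
          exact absurd hc (by simp)
        · apply hne'
          rw [h] at hzz
          simp only [mul_zero] at hzz
          have : y = x := by linear_combination hzz
          rw [this]
      rw [not_and_or] at h2
      rcases h2 with h2 | h2
      · rw [hOrtho _ _ (hkey _ _ h2), zero_mul]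
      · rw [hOrtho _ _ (hkey _ _ h2), mul_zero]
  -- Bessel's inequality
  have hBessel := hON.sum_inner_products_le
    (EuclideanSpace.single ((0:K), (0:K)) (1:ℂ)) (s := Finset.univ)
  have hUval : ∀ p : K × K, U p ((0:K), (0:K)) = ((w 0 : ℝ) : ℂ) := by
    intro p
    show ux p.1 0 * ux p.2 0 = _
    simp only [huxdef]
    show ((Real.sqrt (w 0) : ℝ) : ℂ) * ψ (0 * p.1) * (((Real.sqrt (w 0) : ℝ) : ℂ) * ψ (0 * p.2)) = _
    rw [zero_mul, zero_mul, AddChar.map_zero_eq_one, mul_one,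
      ← Complex.ofReal_mul, Real.mul_self_sqrt (hw 0)]
  have hterm : ∀ p : K × K,
      ‖(inner ℂ (U p) (EuclideanSpace.single ((0:K), (0:K)) (1:ℂ)) : ℂ)‖ ^ 2 = 1 / (q : ℝ) := by
    intro p
    rw [EuclideanSpace.inner_single_right, hUval p, one_mul, Complex.conj_ofReal]
    rw [Complex.norm_real, Real.norm_eq_abs, sq_abs, hw0]
    rw [div_pow, hs2, pow_two]
    field_simp
  have hsum : ∑ i : {x // x ∈ S},
      ‖(inner ℂ (U ((i : K × K))) (EuclideanSpace.single ((0:K), (0:K)) (1:ℂ)) : ℂ)‖ ^ 2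
      = (S.card : ℝ) * (1 / (q : ℝ)) := by
    have h1 : ∑ i : {x // x ∈ S},
        ‖(inner ℂ (U ((i : K × K))) (EuclideanSpace.single ((0:K), (0:K)) (1:ℂ)) : ℂ)‖ ^ 2
        = ∑ _i : {x // x ∈ S}, 1 / (q : ℝ) :=
      Finset.sum_congr rfl fun i _ => hterm ((i : K × K))
    rw [h1, Finset.sum_const, Finset.card_univ, Fintype.card_coe, nsmul_eq_mul]
  have hBessel' : ∑ i : {x // x ∈ S},
      ‖(inner ℂ (U ((i : K × K))) (EuclideanSpace.single ((0:K), (0:K)) (1:ℂ)) : ℂ)‖ ^ 2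
      ≤ ‖EuclideanSpace.single ((0:K), (0:K)) (1:ℂ)‖ ^ 2 := hBessel
  rw [hsum, EuclideanSpace.norm_single, norm_one, one_pow] at hBessel'
  have hfin : (S.card : ℝ) ≤ (q : ℝ) := by
    rw [mul_one_div] at hBessel'
    exact (div_le_one hqR).mp hBessel'
  exact_mod_cast hfin
end Aux

/-- For `q ≡ 1 (mod 4)`, `α(Paley_2(F_q) ⊠ Paley_2(F_q)) = q`. -/
theorem paley2_product_indep_number {K : Type*} [Field K] [Fintype K] (q : ℕ)
    (hq : Fintype.card K = q) (h4 : q % 4 = 1) :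
    indepNumber (fun p r : K × K => p ≠ r ∧
        (p.1 = r.1 ∨ ∃ z : K, p.1 - r.1 = z ^ 2 ∧ z ≠ 0) ∧
        (p.2 = r.2 ∨ ∃ z : K, p.2 - r.2 = z ^ 2 ∧ z ≠ 0)) = q := by
  obtain ⟨S₀, hS₀, hcard₀⟩ := paley_lower q hq h4
  unfold indepNumber
  apply le_antisymm
  · refine csSup_le ⟨q, S₀, hS₀, hcard₀⟩ ?_
    rintro n ⟨S, hS, rfl⟩
    exact paley_upper q hq h4 S hS
  · refine le_csSup ⟨q, ?_⟩ ⟨S₀, hS₀, hcard₀⟩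
    rintro n ⟨S, hS, rfl⟩
    exact paley_upper q hq h4 S hS
end

section
/- Let q be a prime power, k ≥ 2, n ≡ 0 (mod 2k), and b_k ∈ F_q^*. There exists a set A of polynomials over F_q of degree < n with |A| ≥ (α(Paley_k(F_q) ⊠ Paley_k(F_q)))^(n/(2k)) · q^(n(1-1/k)) such that A contains no two distinct elements differing by b_k·u^k for some u ∈ F_q[T]. -/
/-!
Write `n = 2km`. Pair the coefficients of `X ^ (k t)` and `X ^ (k (2m - 1 - t))` for `t < m`,
force each pair into `b • U` for a maximum independent set `U` of `Paley_k ⊠ Paley_k`, and leave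
the other `n - 2m` coefficients free: this gives `|U| ^ m q ^ (n - 2m)` polynomials. If two of
them differ by `b w ^ k` with `w ≠ 0` of trailing degree `e` and degree `d < 2m`, then at the
multiples of `k` the polynomial `w ^ k` vanishes outside `[k e, k d]` and takes the nonzero
`k`-th powers `trail(w) ^ k`, `lead(w) ^ k` at the two ends. Whether `e + d` is below, equal to
or above `2m - 1`, some pair `(t, 2m - 1 - t)` therefore sees a difference of two `k`-th powers,
not both zero: an edge between two distinct elements of `U`.
-/

open Polynomial Finset

theorem exists_finset_card_eq_indepNumber {V : Type*} [Finite V] (Adj : V → V → Prop) :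
    ∃ S : Finset V, (∀ x ∈ S, ∀ y ∈ S, x ≠ y → ¬ Adj x y) ∧ S.card = indepNumber Adj := by
  have := Fintype.ofFinite V
  refine Nat.sSup_mem
    (s := {n | ∃ S : Finset V, (∀ x ∈ S, ∀ y ∈ S, x ≠ y → ¬ Adj x y) ∧ S.card = n})
    ⟨0, ∅, by simp, rfl⟩ ⟨Fintype.card V, ?_⟩
  rintro _ ⟨S, -, rfl⟩
  exact S.card_le_univ

namespace Polynomial

variable {R : Type*} [Semiring R]

theorem natTrailingDegree_pow [NoZeroDivisors R] (p : R[X]) (n : ℕ) :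
    (p ^ n).natTrailingDegree = n * p.natTrailingDegree := by
  rcases eq_or_ne p 0 with rfl | hp
  · cases n <;> simp
  induction n with
  | zero => simp
  | succ n ih => rw [pow_succ, natTrailingDegree_mul (pow_ne_zero n hp) hp, ih, Nat.succ_mul]

theorem trailingCoeff_pow [NoZeroDivisors R] (p : R[X]) (n : ℕ) :
    (p ^ n).trailingCoeff = p.trailingCoeff ^ n := by
  induction n with
  | zero => simp [trailingCoeff]
  | succ n ih => rw [pow_succ, trailingCoeff_mul, ih, pow_succ]

theorem coeff_pow_mul_natTrailingDegree [NoZeroDivisors R] (p : R[X]) (n : ℕ) :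
    (p ^ n).coeff (n * p.natTrailingDegree) = p.trailingCoeff ^ n := by
  rw [← natTrailingDegree_pow, ← trailingCoeff, trailingCoeff_pow]

theorem exists_coeff_pow_pair_eq_pow [NoZeroDivisors R] {w : R[X]} (hw : w ≠ 0) {k N : ℕ}
    (hk : k ≠ 0) (hN : w.natDegree < N) :
    ∃ i j, i ≤ j ∧ i + j + 1 = N ∧
      ((w ^ k).coeff (k * i) ≠ 0 ∨ (w ^ k).coeff (k * j) ≠ 0) ∧
      (∃ a, (w ^ k).coeff (k * i) = a ^ k) ∧ ∃ c, (w ^ k).coeff (k * j) = c ^ k := by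
  set e := w.natTrailingDegree
  set d := w.natDegree
  have hed : e ≤ d := natTrailingDegree_le_natDegree w
  have hlead : (w ^ k).coeff (k * d) = w.leadingCoeff ^ k := coeff_pow_mul_natDegree w k
  have htrail : (w ^ k).coeff (k * e) = w.trailingCoeff ^ k := coeff_pow_mul_natTrailingDegree w k
  have hlead0 : w.leadingCoeff ^ k ≠ 0 := pow_ne_zero k (leadingCoeff_ne_zero.2 hw)
  have htrail0 : w.trailingCoeff ^ k ≠ 0 := pow_ne_zero k (trailingCoeff_nonzero_iff_nonzero.2 hw)
  have habove : ∀ j, d < j → (w ^ k).coeff (k * j) = 0 ^ k := fun j hj => by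
    rw [zero_pow hk]
    exact coeff_eq_zero_of_natDegree_lt (natDegree_pow_le.trans_lt (by gcongr))
  have hbelow : ∀ i, i < e → (w ^ k).coeff (k * i) = 0 ^ k := fun i hi => by
    rw [zero_pow hk]
    exact coeff_eq_zero_of_lt_natTrailingDegree (by rw [natTrailingDegree_pow]; gcongr)
  rcases lt_trichotomy (e + d + 1) N with h | h | h
  · exact ⟨e, N - 1 - e, by omega, by omega, htrail ▸ .inl htrail0, ⟨_, htrail⟩,
      ⟨0, habove _ (by omega)⟩⟩
  · exact ⟨e, d, hed, h, htrail ▸ .inl htrail0, ⟨_, htrail⟩, ⟨_, hlead⟩⟩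
  · exact ⟨N - 1 - d, d, by omega, by omega, hlead ▸ .inr hlead0, ⟨0, hbelow _ (by omega)⟩,
      ⟨_, hlead⟩⟩

variable {N k : ℕ}

noncomputable def blockPoly (c : Fin N → Fin k → R) : R[X] :=
  (degreeLTEquiv R (N * k)).symm (Function.uncurry c ∘ finProdFinEquiv.symm)

theorem blockPoly_mem_degreeLT (c : Fin N → Fin k → R) : blockPoly c ∈ degreeLT R (N * k) :=
  Subtype.prop _

theorem coeff_blockPoly (c : Fin N → Fin k → R) (s : Fin N) (r : Fin k) :
    (blockPoly c).coeff (r + k * s) = c s r := by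
  change degreeLTEquiv R (N * k) _ (finProdFinEquiv (s, r)) = _
  rw [LinearEquiv.apply_symm_apply, Function.comp_apply, Equiv.symm_apply_apply,
    Function.uncurry_apply_pair]

theorem blockPoly_injective : Function.Injective (blockPoly : (Fin N → Fin k → R) → R[X]) :=
  fun c c' h => funext₂ fun s r => by rw [← coeff_blockPoly c s r, h, coeff_blockPoly]

end Polynomial

section PairSlots

variable {α : Type*} {m : ℕ}

def pairSlots (u : Fin m → α × α) : Fin (m + m) → α :=
  Fin.append (fun t => (u t).1) fun t => (u t.rev).2

theorem pairSlots_castAdd (u : Fin m → α × α) (t : Fin m) :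
    pairSlots u (t.castAdd m) = (u t).1 :=
  Fin.append_left ..

theorem pairSlots_natAdd_rev (u : Fin m → α × α) (t : Fin m) :
    pairSlots u (t.rev.natAdd m) = (u t).2 := by
  rw [pairSlots, Fin.append_right, Fin.rev_rev]

theorem pairSlots_injective : Function.Injective (pairSlots : (Fin m → α × α) → Fin (m + m) → α) :=
  fun u u' h => funext fun t => Prod.ext
    (by rw [← pairSlots_castAdd, h, pairSlots_castAdd])
    (by rw [← pairSlots_natAdd_rev, h, pairSlots_natAdd_rev])

end PairSlots

section Construction

variable {R : Type*} [CommRing R] {m k : ℕ}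

/-- The construction with `k + 1` in place of `k`: coefficient `b * (u t).1` at
`X ^ ((k + 1) t)` and `b * (u t).2` at `X ^ ((k + 1) (2m - 1 - t))`, while the `k` coefficients
following each of these come from `f`. -/
noncomputable def sarkozyPoly (b : R) (u : Fin m → R × R) (f : Fin (m + m) → Fin k → R) : R[X] :=
  blockPoly fun s => Fin.cons (b * pairSlots u s) (f s)

variable {b : R} {u : Fin m → R × R} {f : Fin (m + m) → Fin k → R}

theorem sarkozyPoly_mem_degreeLT : sarkozyPoly b u f ∈ degreeLT R ((m + m) * (k + 1)) :=
  blockPoly_mem_degreeLT _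

theorem coeff_sarkozyPoly_succ_mul (s : Fin (m + m)) :
    (sarkozyPoly b u f).coeff ((k + 1) * s) = b * pairSlots u s := by
  rw [sarkozyPoly]
  simpa using coeff_blockPoly (fun s => Fin.cons (b * pairSlots u s) (f s)) s 0

theorem coeff_sarkozyPoly_fst (t : Fin m) :
    (sarkozyPoly b u f).coeff ((k + 1) * t) = b * (u t).1 := by
  rw [← pairSlots_castAdd, ← coeff_sarkozyPoly_succ_mul, Fin.val_castAdd]

theorem coeff_sarkozyPoly_snd (t : Fin m) {j : ℕ} (hj : t + j + 1 = m + m) :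
    (sarkozyPoly b u f).coeff ((k + 1) * j) = b * (u t).2 := by
  have : j = t.rev.natAdd m := by simp only [Fin.val_natAdd, Fin.val_rev]; omega
  rw [this, coeff_sarkozyPoly_succ_mul, pairSlots_natAdd_rev]

theorem sarkozyPoly_injective [IsDomain R] (hb : b ≠ 0) :
    Function.Injective fun uf : (Fin m → R × R) × (Fin (m + m) → Fin k → R) =>
      sarkozyPoly b uf.1 uf.2 := by
  rintro ⟨u, f⟩ ⟨u', f'⟩ h
  have hblocks s := Fin.cons_inj.1 (congrFun (blockPoly_injective h) s)
  exact Prod.ext (pairSlots_injective (funext fun s => mul_left_cancel₀ hb (hblocks s).1))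
    (funext fun s => (hblocks s).2)

theorem exists_pow_pair_of_sarkozyPoly_sub_eq [IsDomain R] (hb : b ≠ 0)
    {u' : Fin m → R × R} {f' : Fin (m + m) → Fin k → R} {w : R[X]} (hw : w ≠ 0)
    (h : sarkozyPoly b u' f' - sarkozyPoly b u f = C b * w ^ (k + 1)) :
    ∃ t, u' t ≠ u t ∧ (∃ z, (u' t).1 - (u t).1 = z ^ (k + 1)) ∧
      ∃ z, (u' t).2 - (u t).2 = z ^ (k + 1) := by
  have hcoeff (i : ℕ) : (sarkozyPoly b u' f').coeff i - (sarkozyPoly b u f).coeff i =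
      b * (w ^ (k + 1)).coeff i := by
    rw [← coeff_sub, h, coeff_C_mul]
  have hdeg : w.natDegree < m + m := by
    have hne : sarkozyPoly b u' f' - sarkozyPoly b u f ≠ 0 :=
      h ▸ mul_ne_zero (C_ne_zero.2 hb) (pow_ne_zero _ hw)
    have hlt := (natDegree_lt_iff_degree_lt hne).2
      (mem_degreeLT.1 (sub_mem sarkozyPoly_mem_degreeLT sarkozyPoly_mem_degreeLT))
    rw [h, natDegree_C_mul hb, natDegree_pow, mul_comm] at hlt
    exact Nat.lt_of_mul_lt_mul_right hlt
  obtain ⟨i, j, hij, hsum, hne, ⟨a, ha⟩, c, hc⟩ :=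
    exists_coeff_pow_pair_eq_pow hw (Nat.add_one_ne_zero k) hdeg
  let t : Fin m := ⟨i, by omega⟩
  have h1 : (u' t).1 - (u t).1 = (w ^ (k + 1)).coeff ((k + 1) * i) := mul_left_cancel₀ hb <| by
    rw [mul_sub, ← coeff_sarkozyPoly_fst (u := u) (f := f),
      ← coeff_sarkozyPoly_fst (u := u') (f := f'), hcoeff]
  have h2 : (u' t).2 - (u t).2 = (w ^ (k + 1)).coeff ((k + 1) * j) := mul_left_cancel₀ hb <| by
    rw [mul_sub, ← coeff_sarkozyPoly_snd (u := u) (f := f) t hsum,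
      ← coeff_sarkozyPoly_snd (u := u') (f := f') t hsum, hcoeff]
  refine ⟨t, fun heq => ?_, ⟨a, h1.trans ha⟩, c, h2.trans hc⟩
  rw [heq, sub_self] at h1 h2
  exact hne.elim (· h1.symm) (· h2.symm)

section SarkozySet

variable [Fintype R] [DecidableEq R]

noncomputable def sarkozySet (b : R) (U : Finset (R × R)) (m k : ℕ) : Finset R[X] :=
  ((Fintype.piFinset fun _ : Fin m => U) ×ˢ (univ : Finset (Fin (m + m) → Fin k → R))).image
    fun uf => sarkozyPoly b uf.1 uf.2

variable {U : Finset (R × R)} {p p' : R[X]}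

theorem degree_lt_of_mem_sarkozySet (hp : p ∈ sarkozySet b U m k) :
    p.degree < ↑((m + m) * (k + 1)) := by
  obtain ⟨uf, -, rfl⟩ := mem_image.1 hp
  exact mem_degreeLT.1 sarkozyPoly_mem_degreeLT

theorem card_sarkozySet [IsDomain R] (hb : b ≠ 0) :
    (sarkozySet b U m k).card = U.card ^ m * Fintype.card R ^ (k * (m + m)) := by
  rw [sarkozySet, card_image_of_injective _ (sarkozyPoly_injective hb), card_product,
    Fintype.card_piFinset, prod_const, card_univ, card_univ, Fintype.card_fin, Fintype.card_fun,
    Fintype.card_fun, Fintype.card_fin, Fintype.card_fin, ← pow_mul]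

theorem sub_ne_C_mul_pow_of_mem_sarkozySet [IsDomain R] (hb : b ≠ 0)
    (hU : ∀ x ∈ U, ∀ y ∈ U, x ≠ y → (∃ z, x.1 - y.1 = z ^ (k + 1)) →
      (∃ z, x.2 - y.2 = z ^ (k + 1)) → False)
    (hp : p ∈ sarkozySet b U m k) (hp' : p' ∈ sarkozySet b U m k) (hne : p ≠ p') (w : R[X]) :
    p' - p ≠ C b * w ^ (k + 1) := by
  intro hw
  simp only [sarkozySet, mem_image, mem_product, Fintype.mem_piFinset] at hp hp'
  obtain ⟨⟨u, f⟩, ⟨hu, -⟩, rfl⟩ := hp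
  obtain ⟨⟨u', f'⟩, ⟨hu', -⟩, rfl⟩ := hp'
  have hw0 : w ≠ 0 := by
    rintro rfl
    rw [zero_pow k.succ_ne_zero, mul_zero, sub_eq_zero] at hw
    exact hne hw.symm
  obtain ⟨t, hne', h1, h2⟩ := exists_pow_pair_of_sarkozyPoly_sub_eq hb hw0 hw
  exact hU _ (hu' t) _ (hu t) hne' h1 h2

end SarkozySet

end Construction

/-- Improved lower bound for `F(u) = b_k u^k`: there is `A ⊆ P_{q,n}` of size at
least `α(Paley_k(F_q) ⊠ Paley_k(F_q))^(n/(2k)) · q^(n(1-1/k))` with no two distinct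
elements differing by `b_k · u^k`. -/
theorem sarkozy_kth_power_general_lower {K : Type*} [Field K] [Fintype K]
    (q k n : ℕ) (hq : Fintype.card K = q) (hk : 2 ≤ k) (hn : 2 * k ∣ n)
    (b : K) (hb : b ≠ 0) :
    ∃ A : Finset (Polynomial K), (∀ p ∈ A, p.degree < n) ∧
      indepNumber (fun x y : K × K => x ≠ y ∧
          (x.1 = y.1 ∨ ∃ z : K, x.1 - y.1 = z ^ k) ∧
          (x.2 = y.2 ∨ ∃ z : K, x.2 - y.2 = z ^ k)) ^ (n / (2 * k)) *
        q ^ (n - n / k) ≤ A.card ∧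
      ∀ p ∈ A, ∀ p' ∈ A, p ≠ p' →
        ¬ ∃ u : Polynomial K, p' - p = Polynomial.C b * u ^ k := by
  classical
  subst hq
  obtain ⟨m, rfl⟩ := hn
  obtain ⟨k, rfl⟩ : ∃ k', k = k' + 1 := ⟨k - 1, by omega⟩
  obtain ⟨U, hU, hUcard⟩ := exists_finset_card_eq_indepNumber fun x y : K × K => x ≠ y ∧
    (x.1 = y.1 ∨ ∃ z : K, x.1 - y.1 = z ^ (k + 1)) ∧ (x.2 = y.2 ∨ ∃ z : K, x.2 - y.2 = z ^ (k + 1))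
  have hn : 2 * (k + 1) * m = (m + m) * (k + 1) := by ring
  refine ⟨sarkozySet b U m k, fun p hp => hn ▸ degree_lt_of_mem_sarkozySet hp, ?_,
    fun p hp p' hp' hne ⟨w, hw⟩ => sub_ne_C_mul_pow_of_mem_sarkozySet hb
      (fun x hx y hy hxy h1 h2 => hU x hx y hy hxy ⟨hxy, .inr h1, .inr h2⟩) hp hp' hne w hw⟩
  have hexp : (m + m) * (k + 1) - (m + m) * (k + 1) / (k + 1) = k * (m + m) := by
    rw [Nat.mul_div_cancel _ k.succ_pos]
    exact Nat.sub_eq_of_eq_add (by ring)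
  rw [card_sarkozySet hb, hUcard, Nat.mul_div_cancel_left m (by omega), hn, hexp]
end
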